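/- arXiv:1804.04520 — 7 statements merged into one kernel-verified Lean document; each statement's English description precedes it below -/
import Mathlib

section
/- Let η be an antiunitary involution on a finite-dimensional complex Hilbert space H of dimension 2d, and let Q, Q' be η-flipped projections. Choose orthonormal bases φ₁,…,φ_d of ran Q and φ'₁,…,φ'_d of ran Q', extended by φ_{α+d} = ηφ_α and φ'_{α+d} = ηφ'_α to bases of H. Then the determinant of the 2d×2d matrix M with entries M_{αβ} = ⟨φ_α, φ'_β⟩ is a real number of modulus one, i.e. det M = ±1. -/
open scoped InnerProductSpace

/-- The determinant of the Gram-type matrix `M_{αβ} = ⟪φ_α, φ'_β⟫` built from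
orthonormal bases of `ran Q` and `ran Q'` extended via `η`. -/
noncomputable def gramDet {H : Type*} [NormedAddCommGroup H] [InnerProductSpace ℂ H]
    (η : H → H) {d : ℕ} (φ φ' : Fin d → H) : ℂ :=
  Matrix.det (Matrix.of fun i j : Fin d ⊕ Fin d =>
    ⟪Sum.elim φ (fun a => η (φ a)) i, Sum.elim φ' (fun a => η (φ' a)) j⟫_ℂ)

section Aux

variable {H : Type*} [NormedAddCommGroup H] [InnerProductSpace ℂ H]

/-- The η-extended family is orthonormal. -/
lemma ext_orthonormal {d : ℕ} (η : H → H)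
    (hinner : ∀ x y, ⟪η x, η y⟫_ℂ = ⟪y, x⟫_ℂ)
    (hinv : ∀ x, η (η x) = x)
    (Q : H →ₗ[ℂ] H) (hQsa : ∀ x y, ⟪Q x, y⟫_ℂ = ⟪x, Q y⟫_ℂ)
    (hQflip : ∀ x, η (Q (η x)) + Q x = x)
    (φ : Fin d → H) (hφon : Orthonormal ℂ φ) (hφmem : ∀ a, Q (φ a) = φ a) :
    Orthonormal ℂ (Sum.elim φ (fun a => η (φ a))) := by
  have hQη : ∀ b, Q (η (φ b)) = 0 := by
    intro b
    have h := hQflip (η (φ b))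
    rw [hinv, hφmem] at h
    exact add_eq_left.mp h
  have hcross : ∀ a b, ⟪φ a, η (φ b)⟫_ℂ = 0 := by
    intro a b
    rw [← hφmem a, hQsa, hQη, inner_zero_right]
  rw [orthonormal_iff_ite] at hφon ⊢
  rintro (a | a) (b | b)
  · simpa using hφon a b
  · simpa using hcross a b
  · simp only [Sum.elim_inl, Sum.elim_inr, Sum.inr.injEq, Sum.elim_inr]
    rw [← inner_conj_symm, hcross b a]
    simp
  · simp only [Sum.elim_inr, Sum.inr.injEq]
    rw [hinner, hφon b a]
    simp [eq_comm]

end Aux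

/-- For η-flipped projections `Q, Q'` on a `2d`-dimensional complex Hilbert
space, the determinant of the matrix `M_{αβ} = ⟪φ_α, φ'_β⟫` of the η-extended bases
is `±1`. -/
theorem gramDet_eq_pm_one
    {H : Type*} [NormedAddCommGroup H] [InnerProductSpace ℂ H] [FiniteDimensional ℂ H]
    (d : ℕ) (hd : Module.finrank ℂ H = 2 * d)
    (η : H → H)
    (hadd : ∀ x y, η (x + y) = η x + η y)
    (hsmul : ∀ (c : ℂ) (x : H), η (c • x) = (starRingEnd ℂ c) • η x)
    (hinner : ∀ x y, ⟪η x, η y⟫_ℂ = ⟪y, x⟫_ℂ)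
    (hinv : ∀ x, η (η x) = x)
    (Q Q' : H →ₗ[ℂ] H)
    (hQproj : Q ∘ₗ Q = Q) (hQsa : ∀ x y, ⟪Q x, y⟫_ℂ = ⟪x, Q y⟫_ℂ)
    (hQflip : ∀ x, η (Q (η x)) + Q x = x)
    (hQ'proj : Q' ∘ₗ Q' = Q') (hQ'sa : ∀ x y, ⟪Q' x, y⟫_ℂ = ⟪x, Q' y⟫_ℂ)
    (hQ'flip : ∀ x, η (Q' (η x)) + Q' x = x)
    (φ φ' : Fin d → H)
    (hφon : Orthonormal ℂ φ) (hφmem : ∀ a, Q (φ a) = φ a)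
    (hφspan : ∀ x, Q x ∈ Submodule.span ℂ (Set.range φ))
    (hφ'on : Orthonormal ℂ φ') (hφ'mem : ∀ a, Q' (φ' a) = φ' a)
    (hφ'span : ∀ x, Q' x ∈ Submodule.span ℂ (Set.range φ')) :
    gramDet η φ φ' = 1 ∨ gramDet η φ φ' = -1 := by
  classical
  set e : Fin d ⊕ Fin d → H := Sum.elim φ (fun a => η (φ a)) with he
  set f : Fin d ⊕ Fin d → H := Sum.elim φ' (fun a => η (φ' a)) with hf
  have heon : Orthonormal ℂ e := ext_orthonormal η hinner hinv Q hQsa hQflip φ hφon hφmem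
  have hfon : Orthonormal ℂ f := ext_orthonormal η hinner hinv Q' hQ'sa hQ'flip φ' hφ'on hφ'mem
  have hcard : Fintype.card (Fin d ⊕ Fin d) = Module.finrank ℂ H := by
    simp [hd, two_mul]
  -- e forms an orthonormal basis
  have hespan : ⊤ ≤ Submodule.span ℂ (Set.range e) :=
    (heon.linearIndependent.span_eq_top_of_card_eq_finrank' hcard).ge
  let b : OrthonormalBasis (Fin d ⊕ Fin d) ℂ H := OrthonormalBasis.mk heon hespan
  have hbe : ∀ i, b i = e i := fun i => OrthonormalBasis.coe_mk heon hespan ▸ rfl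
  set M : Matrix (Fin d ⊕ Fin d) (Fin d ⊕ Fin d) ℂ :=
    Matrix.of (fun i j => ⟪e i, f j⟫_ℂ) with hM
  have hgram : gramDet η φ φ' = M.det := rfl
  -- unitarity: M.conjTranspose * M = 1
  have hunit : M.conjTranspose * M = 1 := by
    ext i j
    simp only [Matrix.mul_apply, Matrix.conjTranspose_apply, hM, Matrix.of_apply,
      RCLike.star_def]
    have : ∀ k, (starRingEnd ℂ) ⟪e k, f i⟫_ℂ * ⟪e k, f j⟫_ℂ = ⟪f i, b k⟫_ℂ * ⟪b k, f j⟫_ℂ := by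
      intro k
      rw [inner_conj_symm, hbe]
    rw [Finset.sum_congr rfl (fun k _ => this k), b.sum_inner_mul_inner]
    rw [orthonormal_iff_ite] at hfon
    rw [hfon i j]
    by_cases h : i = j <;> simp [h, Matrix.one_apply]
  have hdet1 : (starRingEnd ℂ) M.det * M.det = 1 := by
    have := congrArg Matrix.det hunit
    rwa [Matrix.det_mul, Matrix.det_conjTranspose, Matrix.det_one] at this
  -- reality: conj M = M reindexed by the swap
  have hηe : ∀ i, η (e i) = e (Equiv.sumComm (Fin d) (Fin d) i) := by
    rintro (a | a) <;> simp [he, hinv]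
  have hηf : ∀ i, η (f i) = f (Equiv.sumComm (Fin d) (Fin d) i) := by
    rintro (a | a) <;> simp [hf, hinv]
  have hreal : (starRingEnd ℂ) M.det = M.det := by
    have hmap : M.map (starRingEnd ℂ) =
        M.submatrix (Equiv.sumComm (Fin d) (Fin d)) (Equiv.sumComm (Fin d) (Fin d)) := by
      ext i j
      simp only [Matrix.map_apply, Matrix.submatrix_apply, hM, Matrix.of_apply]
      rw [inner_conj_symm, ← hηe, ← hηf, hinner]
    calc (starRingEnd ℂ) M.det = (M.map (starRingEnd ℂ)).det := by
            rw [RingHom.map_det, RingHom.mapMatrix_apply]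
      _ = M.det := by rw [hmap, Matrix.det_submatrix_equiv_self]
  rw [hgram, ← mul_self_eq_one_iff]
  calc M.det * M.det = (starRingEnd ℂ) M.det * M.det := by rw [hreal]
    _ = 1 := hdet1
end

section
/- Let η be an antiunitary involution on a 2d-dimensional complex Hilbert space, Q an η-flipped projection, and N a unitary commuting with η. Then Q' = NQN* is also an η-flipped projection, and s(Q, Q') = det N, where s is the relative sign defined via extended bases. -/
open scoped InnerProductSpace

/-- If `Q` is an η-flipped projection and `N` is a unitary commuting with
`η`, then `Q' = N Q N*` is again an η-flipped projection and `s(Q, Q') = det N`. -/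
theorem gramDet_conjugated_eq_det
    {H : Type*} [NormedAddCommGroup H] [InnerProductSpace ℂ H] [FiniteDimensional ℂ H]
    (d : ℕ) (hd : Module.finrank ℂ H = 2 * d)
    (η : H → H)
    (hadd : ∀ x y, η (x + y) = η x + η y)
    (hsmul : ∀ (c : ℂ) (x : H), η (c • x) = (starRingEnd ℂ c) • η x)
    (hinner : ∀ x y, ⟪η x, η y⟫_ℂ = ⟪y, x⟫_ℂ)
    (hinv : ∀ x, η (η x) = x)
    (Q : H →ₗ[ℂ] H)
    (hQproj : Q ∘ₗ Q = Q) (hQsa : ∀ x y, ⟪Q x, y⟫_ℂ = ⟪x, Q y⟫_ℂ)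
    (hQflip : ∀ x, η (Q (η x)) + Q x = x)
    (N : H ≃ₗᵢ[ℂ] H)
    (hcomm : ∀ x, N (η x) = η (N x))
    (φ : Fin d → H)
    (hφon : Orthonormal ℂ φ) (hφmem : ∀ a, Q (φ a) = φ a)
    (hφspan : ∀ x, Q x ∈ Submodule.span ℂ (Set.range φ)) :
    (((N.toLinearMap ∘ₗ Q ∘ₗ N.symm.toLinearMap) ∘ₗ
        (N.toLinearMap ∘ₗ Q ∘ₗ N.symm.toLinearMap)
        = N.toLinearMap ∘ₗ Q ∘ₗ N.symm.toLinearMap) ∧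
      (∀ x y, ⟪(N.toLinearMap ∘ₗ Q ∘ₗ N.symm.toLinearMap) x, y⟫_ℂ
        = ⟪x, (N.toLinearMap ∘ₗ Q ∘ₗ N.symm.toLinearMap) y⟫_ℂ) ∧
      (∀ x, η ((N.toLinearMap ∘ₗ Q ∘ₗ N.symm.toLinearMap) (η x))
        + (N.toLinearMap ∘ₗ Q ∘ₗ N.symm.toLinearMap) x = x)) ∧
    gramDet η φ (fun a => N (φ a)) = LinearMap.det (N.toLinearMap : H →ₗ[ℂ] H) := by
  have hη0 : η 0 = 0 := by
    have := hsmul 0 0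
    simpa using this
  have hQQ : ∀ z, Q (Q z) = Q z := fun z => LinearMap.ext_iff.mp hQproj z
  have hsymmcomm : ∀ x, N.symm (η x) = η (N.symm x) := by
    intro x
    have h := hcomm (N.symm x)
    rw [N.apply_symm_apply] at h
    rw [← h, N.symm_apply_apply]
  have hQη0 : ∀ a, Q (η (φ a)) = 0 := by
    intro a
    have h := hQflip (φ a)
    rw [hφmem a] at h
    have h2 : η (Q (η (φ a))) = 0 := by
      have := congrArg (fun z => z - φ a) h
      simpa using this
    have := congrArg η h2
    rwa [hinv, hη0] at this
  constructor
  · refine ⟨?_, ?_, ?_⟩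
    · ext x
      show N (Q (N.symm (N (Q (N.symm x))))) = N (Q (N.symm x))
      rw [N.symm_apply_apply, hQQ]
    · intro x y
      show ⟪N (Q (N.symm x)), y⟫_ℂ = ⟪x, N (Q (N.symm y))⟫_ℂ
      conv_lhs => rw [show y = N (N.symm y) from (N.apply_symm_apply y).symm]
      rw [LinearIsometryEquiv.inner_map_map, hQsa]
      conv_rhs => rw [show x = N (N.symm x) from (N.apply_symm_apply x).symm,
        LinearIsometryEquiv.inner_map_map]
    · intro x
      show η (N (Q (N.symm (η x)))) + N (Q (N.symm x)) = x
      rw [hsymmcomm, ← hcomm, ← map_add N]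
      rw [hQflip (N.symm x), N.apply_symm_apply]
  · -- the determinant identity
    set ψ : Fin d ⊕ Fin d → H := Sum.elim φ (fun a => η (φ a)) with hψ
    have hψon : Orthonormal ℂ ψ := by
      rw [orthonormal_iff_ite]
      have hφ' := orthonormal_iff_ite.mp hφon
      rintro (a | a) (b | b)
      · simpa [hψ] using hφ' a b
      · simp only [hψ, Sum.elim_inl, Sum.elim_inr]
        rw [← hφmem a, hQsa, hQη0]
        simp
      · simp only [hψ, Sum.elim_inl, Sum.elim_inr]
        have h0 : ⟪φ b, η (φ a)⟫_ℂ = 0 := by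
          rw [← hφmem b, hQsa, hQη0]; simp
        rw [← inner_conj_symm, h0]
        simp
      · simp only [hψ, Sum.elim_inr]
        rw [hinner, hφ' b a]
        by_cases h : a = b
        · simp [h]
        · have h' : b ≠ a := fun hb => h hb.symm
          simp [h, h']
    have hcard : Fintype.card (Fin d ⊕ Fin d) = Module.finrank ℂ H := by
      simp [hd, two_mul]
    have hli := hψon.linearIndependent
    have hspan : ⊤ ≤ Submodule.span ℂ (Set.range ψ) :=
      (hli.span_eq_top_of_card_eq_finrank' hcard).ge
    let b : OrthonormalBasis (Fin d ⊕ Fin d) ℂ H := OrthonormalBasis.mk hψon hspan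
    have hb : ⇑b = ψ := OrthonormalBasis.coe_mk hψon hspan
    have hmat : (Matrix.of fun i j : Fin d ⊕ Fin d =>
        ⟪Sum.elim φ (fun a => η (φ a)) i,
          Sum.elim (fun a => N (φ a)) (fun a => η (N (φ a))) j⟫_ℂ)
        = LinearMap.toMatrix b.toBasis b.toBasis (N.toLinearMap : H →ₗ[ℂ] H) := by
      ext i j
      have hψ'j : Sum.elim (fun a => N (φ a)) (fun a => η (N (φ a))) j = N (ψ j) := by
        cases j with
        | inl a => simp [hψ]
        | inr a => simp [hψ, ← hcomm]
      rw [Matrix.of_apply, hψ'j, LinearMap.toMatrix_apply, OrthonormalBasis.coe_toBasis,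
        OrthonormalBasis.coe_toBasis_repr_apply, OrthonormalBasis.repr_apply_apply, hb]
      rfl
    rw [gramDet, hmat, LinearMap.det_toMatrix]
end

section
/- Let η be an antiunitary involution on a finite-dimensional complex Hilbert space H. For an η-flipped projection Q, the operator U_Q = iQ - i(1-Q) satisfies ηU_Qη = U_Q, is unitary, and is antisymmetric (U_Q* = -U_Q); hence, expressing U_Q as a real matrix in an η-real orthonormal basis, it is a real antisymmetric orthogonal matrix whose Pfaffian equals ±1. -/
open scoped InnerProductSpace Matrix


lemma aux_det_pos_of_sq_neg_one {n : ℕ} (A : Matrix (Fin n) (Fin n) ℝ)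
    (hA : A * A = -1) : 0 < A.det := by
  set f : ℝ → ℝ := fun s => (s • (1 : Matrix (Fin n) (Fin n) ℝ) + A).det with hf
  have key : ∀ s : ℝ, (s • (1 : Matrix (Fin n) (Fin n) ℝ) + A) *
      (s • (1 : Matrix (Fin n) (Fin n) ℝ) - A) = (s ^ 2 + 1) • 1 := by
    intro s
    simp only [add_mul, mul_sub, Matrix.smul_mul, Matrix.mul_smul, Matrix.one_mul,
      Matrix.mul_one, hA, smul_smul]
    module
  have hdet : ∀ s : ℝ, f s ≠ 0 := by
    intro s hs
    have h2 := congrArg Matrix.det (key s)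
    rw [Matrix.det_mul, Matrix.det_smul, Matrix.det_one, mul_one] at h2
    have hpos : (0:ℝ) < (s ^ 2 + 1) ^ Fintype.card (Fin n) := pow_pos (by positivity) _
    rw [show ((s • (1 : Matrix (Fin n) (Fin n) ℝ) + A).det) = f s from rfl, hs, zero_mul] at h2
    exact absurd h2.symm (ne_of_gt hpos)
  have hcont : Continuous f :=
    Continuous.matrix_det ((continuous_id.smul continuous_const).add continuous_const)
  set g : ℝ → ℝ := fun u => ((1 : Matrix (Fin n) (Fin n) ℝ) + u • A).det with hg
  have hgcont : Continuous g :=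
    Continuous.matrix_det (continuous_const.add (continuous_id.smul continuous_const))
  have hg0 : g 0 = 1 := by simp [hg]
  have hev : ∀ᶠ u in nhds (0:ℝ), 0 < g u := by
    have : ContinuousAt g 0 := hgcont.continuousAt
    have := this.eventually_mem (s := Set.Ioi (0:ℝ)) (isOpen_Ioi.mem_nhds (by simp [hg0]))
    simpa using this
  obtain ⟨δ, hδ, hball⟩ := Metric.eventually_nhds_iff.mp hev
  set s0 : ℝ := max 1 (2 / δ) with hs0
  have hs0pos : 0 < s0 := lt_of_lt_of_le one_pos (le_max_left _ _)
  have hinv : |s0⁻¹ - 0| < δ := by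
    rw [sub_zero, abs_of_pos (inv_pos.mpr hs0pos)]
    have h2 : 2 / δ ≤ s0 := le_max_right _ _
    have : s0⁻¹ ≤ δ / 2 := by
      rw [inv_le_comm₀ hs0pos (by positivity), show (δ/2)⁻¹ = 2/δ by rw [inv_div]]
      exact h2
    linarith [half_lt_self hδ]
  have hfs0 : 0 < f s0 := by
    have heq : s0 • ((1 : Matrix (Fin n) (Fin n) ℝ) + s0⁻¹ • A)
        = s0 • (1 : Matrix (Fin n) (Fin n) ℝ) + A := by
      rw [smul_add, smul_smul, mul_inv_cancel₀ (ne_of_gt hs0pos), one_smul]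
    have : f s0 = s0 ^ Fintype.card (Fin n) * g s0⁻¹ := by
      rw [hf]; dsimp only; rw [← heq, Matrix.det_smul]
    rw [this]
    exact mul_pos (pow_pos hs0pos _) (hball hinv)
  have hf0 : f 0 = A.det := by simp [hf]
  by_contra hle
  push_neg at hle
  have hlt : f 0 < 0 := lt_of_le_of_ne (hf0 ▸ hle) (hdet 0)
  obtain ⟨c, _, hc⟩ := intermediate_value_Icc (le_of_lt hs0pos) hcont.continuousOn
    ⟨le_of_lt hlt, le_of_lt hfs0⟩
  exact hdet c hc


/-- For an η-flipped projection `Q`, the operator `U_Q = iQ - i(1-Q)`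
commutes with `η`, is unitary and antisymmetric (`U_Q* = -U_Q`); hence its matrix in any
η-real orthonormal basis is a real antisymmetric orthogonal matrix, whose Pfaffian is
`±1` (equivalently, being real antisymmetric, its determinant — the square of the
Pfaffian — equals `1`). -/
theorem UQ_real_antisymmetric_orthogonal_pfaffian
    {H : Type*} [NormedAddCommGroup H] [InnerProductSpace ℂ H] [FiniteDimensional ℂ H]
    (η : H → H)
    (hadd : ∀ x y, η (x + y) = η x + η y)
    (hsmul : ∀ (c : ℂ) (x : H), η (c • x) = (starRingEnd ℂ c) • η x)
    (hinner : ∀ x y, ⟪η x, η y⟫_ℂ = ⟪y, x⟫_ℂ)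
    (hinv : ∀ x, η (η x) = x)
    (Q : H →ₗ[ℂ] H)
    (hproj : Q ∘ₗ Q = Q)
    (hsa : ∀ x y, ⟪Q x, y⟫_ℂ = ⟪x, Q y⟫_ℂ)
    (hflip : ∀ x, η (Q (η x)) + Q x = x)
    (U : H →ₗ[ℂ] H)
    (hUdef : U = Complex.I • Q - Complex.I • (LinearMap.id - Q)) :
    (∀ x, η (U (η x)) = U x) ∧
    (∀ x y, ⟪U x, U y⟫_ℂ = ⟪x, y⟫_ℂ) ∧
    (∀ x y, ⟪U x, y⟫_ℂ = -⟪x, U y⟫_ℂ) ∧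
    (∀ b : OrthonormalBasis (Fin (Module.finrank ℂ H)) ℂ H,
      (∀ i, η (b i) = b i) →
      (∀ i j, (⟪b i, U (b j)⟫_ℂ).im = 0) ∧
      ((Matrix.of fun i j => (⟪b i, U (b j)⟫_ℂ).re)ᵀ
        = -(Matrix.of fun i j => (⟪b i, U (b j)⟫_ℂ).re)) ∧
      ((Matrix.of fun i j => (⟪b i, U (b j)⟫_ℂ).re)ᵀ
        * (Matrix.of fun i j => (⟪b i, U (b j)⟫_ℂ).re) = 1) ∧
      (∃ p : ℝ, (p = 1 ∨ p = -1) ∧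
        p ^ 2 = (Matrix.of fun i j => (⟪b i, U (b j)⟫_ℂ).re).det)) := by
  -- basic facts about η
  have hsub : ∀ x y, η (x - y) = η x - η y := by
    intro x y
    have h := hadd (x - y) y
    rw [sub_add_cancel] at h
    exact eq_sub_of_add_eq h.symm
  -- basic facts about Q
  have hQQ : ∀ x, Q (Q x) = Q x := by
    intro x
    have := LinearMap.ext_iff.mp hproj x
    simpa [LinearMap.comp_apply] using this
  have hQin : ∀ x y, ⟪Q x, Q y⟫_ℂ = ⟪x, Q y⟫_ℂ := by
    intro x y; rw [hsa, hQQ]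
  have hflip' : ∀ x, η (Q (η x)) = x - Q x := fun x => eq_sub_of_add_eq (hflip x)
  have hU2 : ∀ x, U x = Complex.I • (Q x - (x - Q x)) := by
    intro x
    rw [hUdef]
    simp only [LinearMap.sub_apply, LinearMap.smul_apply, LinearMap.id_apply, smul_sub]
  -- part 1
  have p1 : ∀ x, η (U (η x)) = U x := by
    intro x
    rw [hU2 (η x), hU2 x]
    rw [show Complex.I • (Q (η x) - (η x - Q (η x)))
        = Complex.I • Q (η x) - Complex.I • (η x - Q (η x)) from smul_sub _ _ _]
    rw [hsub, hsmul, hsmul, hsub, hflip', hinv, Complex.conj_I]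
    module
  -- part 3 helper: symmetry of 2Q-1
  have p2 : ∀ x y, ⟪U x, U y⟫_ℂ = ⟪x, y⟫_ℂ := by
    intro x y
    rw [hU2 x, hU2 y, inner_smul_left, inner_smul_right, Complex.conj_I, ← mul_assoc,
      neg_mul, Complex.I_mul_I, neg_neg, one_mul]
    simp only [inner_sub_left, inner_sub_right]
    linear_combination 4 * hQin x y - 2 * hsa x y
  have p3 : ∀ x y, ⟪U x, y⟫_ℂ = -⟪x, U y⟫_ℂ := by
    intro x y
    rw [hU2 x, hU2 y, inner_smul_left, inner_smul_right, Complex.conj_I]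
    simp only [inner_sub_left, inner_sub_right]
    linear_combination (-2 * Complex.I) * hsa x y
  refine ⟨p1, p2, p3, ?_⟩
  intro b hb
  have hηU : ∀ j, η (U (b j)) = U (b j) := by
    intro j
    have h := p1 (b j)
    rw [hb j] at h
    exact h
  have hreal : ∀ i j, (starRingEnd ℂ) ⟪b i, U (b j)⟫_ℂ = ⟪b i, U (b j)⟫_ℂ := by
    intro i j
    have h := hinner (b i) (U (b j))
    rw [hb i, hηU j] at h
    rw [inner_conj_symm]
    exact h.symm
  have him : ∀ i j, (⟪b i, U (b j)⟫_ℂ).im = 0 := by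
    intro i j
    exact Complex.conj_eq_iff_im.mp (hreal i j)
  have hswap : ∀ i j, ⟪b j, U (b i)⟫_ℂ = -⟪b i, U (b j)⟫_ℂ := by
    intro i j
    have h := p3 (b j) (b i)
    have h2 : ⟪b j, U (b i)⟫_ℂ = -⟪U (b j), b i⟫_ℂ := by
      rw [h]; ring
    have h3 : ⟪U (b j), b i⟫_ℂ = ⟪b i, U (b j)⟫_ℂ := by
      rw [← hreal i j, inner_conj_symm]
    rw [h2, h3]
  have hT : (Matrix.of fun i j => (⟪b i, U (b j)⟫_ℂ).re)ᵀ
      = -(Matrix.of fun i j => (⟪b i, U (b j)⟫_ℂ).re) := by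
    ext i j
    simp only [Matrix.transpose_apply, Matrix.neg_apply, Matrix.of_apply]
    rw [hswap i j, Complex.neg_re]
  have hO : (Matrix.of fun i j => (⟪b i, U (b j)⟫_ℂ).re)ᵀ
      * (Matrix.of fun i j => (⟪b i, U (b j)⟫_ℂ).re) = 1 := by
    ext i j
    rw [Matrix.mul_apply]
    simp only [Matrix.transpose_apply, Matrix.of_apply]
    have hP : ∑ k, ⟪b k, U (b i)⟫_ℂ * ⟪b k, U (b j)⟫_ℂ = ⟪b i, b j⟫_ℂ := by
      have h := b.sum_inner_mul_inner (U (b i)) (U (b j))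
      rw [p2] at h
      rw [← h]
      refine Finset.sum_congr rfl fun k _ => ?_
      rw [← hreal k i, inner_conj_symm]
    have hre := congrArg Complex.re hP
    rw [Complex.re_sum] at hre
    have hterm : ∀ k, (⟪b k, U (b i)⟫_ℂ * ⟪b k, U (b j)⟫_ℂ).re
        = (⟪b k, U (b i)⟫_ℂ).re * (⟪b k, U (b j)⟫_ℂ).re := by
      intro k
      rw [Complex.mul_re, him k i, him k j]
      ring
    simp only [hterm] at hre
    rw [hre, orthonormal_iff_ite.mp b.orthonormal, Matrix.one_apply]
    split <;> simp
  refine ⟨him, hT, hO, ?_⟩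
  have hsq : (Matrix.of fun i j => (⟪b i, U (b j)⟫_ℂ).re).det
      * (Matrix.of fun i j => (⟪b i, U (b j)⟫_ℂ).re).det = 1 := by
    have := congrArg Matrix.det hO
    rwa [Matrix.det_mul, Matrix.det_transpose, Matrix.det_one] at this
  have hM2 : (Matrix.of fun i j => (⟪b i, U (b j)⟫_ℂ).re)
      * (Matrix.of fun i j => (⟪b i, U (b j)⟫_ℂ).re) = -1 := by
    have hM : (Matrix.of fun i j => (⟪b i, U (b j)⟫_ℂ).re)
        = -(Matrix.of fun i j => (⟪b i, U (b j)⟫_ℂ).re)ᵀ := by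
      rw [hT, neg_neg]
    calc (Matrix.of fun i j => (⟪b i, U (b j)⟫_ℂ).re)
          * (Matrix.of fun i j => (⟪b i, U (b j)⟫_ℂ).re)
        = -((Matrix.of fun i j => (⟪b i, U (b j)⟫_ℂ).re)ᵀ
          * (Matrix.of fun i j => (⟪b i, U (b j)⟫_ℂ).re)) := by
          rw [← neg_mul, ← hM]
      _ = -1 := by rw [hO]
  have hpos := aux_det_pos_of_sq_neg_one _ hM2
  refine ⟨1, Or.inl rfl, ?_⟩
  nlinarith [hsq, hpos]
end

section
/- Let W be a bounded operator on ℓ²(ℤ) ⊗ ℂ^d with block matrix elements W(x,y) : ℂ^d → ℂ^d satisfying ‖W(x,y)‖ ≤ c·|x-y|^{-α} for all x ≠ y, with α > 1. Then the commutator [P, W] with the half-line projection P = P_{≥0} is compact (indeed Hilbert–Schmidt off-diagonal blocks). -/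
open scoped InnerProductSpace Matrix ENNReal NNReal

/-- The Hilbert space `ℓ²(ℤ) ⊗ ℂ^d` of square-summable `ℂ^d`-valued sequences. -/
noncomputable abbrev SeqSpace (d : ℕ) := lp (fun _ : ℤ => EuclideanSpace ℂ (Fin d)) 2

/-- Cauchy–Schwarz for infinite sums of nonnegative reals. -/
lemma cs_summable {ι : Type*} (a b : ι → ℝ) (ha : ∀ y, 0 ≤ a y) (hb : ∀ y, 0 ≤ b y)
    (ha2 : Summable (fun y => a y ^ 2)) (hb2 : Summable (fun y => b y ^ 2)) :
    Summable (fun y => a y * b y) := by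
  refine Summable.of_nonneg_of_le (fun y => mul_nonneg (ha y) (hb y)) (fun y => ?_)
    ((ha2.add hb2).div_const 2)
  nlinarith [sq_nonneg (a y - b y)]

lemma cs_tsum {ι : Type*} (a b : ι → ℝ) (ha : ∀ y, 0 ≤ a y) (hb : ∀ y, 0 ≤ b y)
    (ha2 : Summable (fun y => a y ^ 2)) (hb2 : Summable (fun y => b y ^ 2)) :
    ∑' y, a y * b y ≤ Real.sqrt (∑' y, a y ^ 2) * Real.sqrt (∑' y, b y ^ 2) := by
  refine Summable.tsum_le_of_sum_le (cs_summable a b ha hb ha2 hb2) fun s => ?_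
  have h1 : (∑ i ∈ s, a i * b i) ^ 2 ≤ (∑ i ∈ s, a i ^ 2) * ∑ i ∈ s, b i ^ 2 :=
    Finset.sum_mul_sq_le_sq_mul_sq s a b
  have h2 : (∑ i ∈ s, a i ^ 2) ≤ ∑' y, a y ^ 2 :=
    Summable.sum_le_tsum s (fun i _ => sq_nonneg _) ha2
  have h3 : (∑ i ∈ s, b i ^ 2) ≤ ∑' y, b y ^ 2 :=
    Summable.sum_le_tsum s (fun i _ => sq_nonneg _) hb2
  have hsn : 0 ≤ ∑ i ∈ s, a i * b i :=
    Finset.sum_nonneg fun i _ => mul_nonneg (ha i) (hb i)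
  have := Real.sqrt_le_sqrt (h1.trans (mul_le_mul h2 h3 (Finset.sum_nonneg fun i _ => sq_nonneg _)
    ((Summable.sum_le_tsum s (fun i _ => sq_nonneg _) ha2).trans' (Finset.sum_nonneg fun i _ => sq_nonneg _))))
  rwa [Real.sqrt_sq hsn, Real.sqrt_mul (tsum_nonneg fun _ => sq_nonneg _)] at this

/-- A continuous linear map into a finite-dimensional space is compact. -/
lemma isCompactOperator_findim {d : ℕ} {M : Type*} [NormedAddCommGroup M] [NormedSpace ℂ M]
    (f : M →L[ℂ] EuclideanSpace ℂ (Fin d)) : IsCompactOperator ⇑f := by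
  refine ⟨Metric.closedBall 0 ‖f‖, isCompact_closedBall _ _, ?_⟩
  refine Filter.mem_of_superset (Metric.ball_mem_nhds 0 one_pos) fun z hz => ?_
  simp only [Set.mem_preimage, Metric.mem_closedBall, dist_zero_right]
  calc ‖f z‖ ≤ ‖f‖ * ‖z‖ := f.le_opNorm z
    _ ≤ ‖f‖ * 1 := by
        refine mul_le_mul_of_nonneg_left ?_ (norm_nonneg f)
        simpa [dist_zero_right] using (Metric.mem_ball.mp hz).le
    _ = ‖f‖ := mul_one _

namespace SeqAux

variable {d : ℕ}

/-- Evaluation at a coordinate as a continuous linear map. -/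
noncomputable def evalCLM (d : ℕ) (x : ℤ) : SeqSpace d →L[ℂ] EuclideanSpace ℂ (Fin d) :=
  LinearMap.mkContinuous
    { toFun := fun ψ => (ψ : ∀ _ : ℤ, EuclideanSpace ℂ (Fin d)) x
      map_add' := fun f g => by
        show (↑(f + g) : ∀ _ : ℤ, EuclideanSpace ℂ (Fin d)) x = _
        rw [lp.coeFn_add]; rfl
      map_smul' := fun c f => by
        show (↑(c • f) : ∀ _ : ℤ, EuclideanSpace ℂ (Fin d)) x = _
        rw [lp.coeFn_smul]; rfl }
    1 (fun ψ => by simpa using lp.norm_apply_le_norm (by norm_num) ψ x)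

@[simp] lemma evalCLM_apply (x : ℤ) (ψ : SeqSpace d) :
    evalCLM d x ψ = (ψ : ∀ _ : ℤ, EuclideanSpace ℂ (Fin d)) x := rfl

lemma single_apply' (x j : ℤ) (v : EuclideanSpace ℂ (Fin d)) :
    (lp.single (E := fun _ : ℤ => EuclideanSpace ℂ (Fin d)) 2 x v : ∀ _ : ℤ, _) j
      = if j = x then v else 0 := by
  by_cases h : j = x
  · subst h; simp [lp.single_apply_self]
  · simp [lp.single_apply_ne 2 x _ h, h]

/-- `lp.single` as a continuous linear map. -/
noncomputable def singleCLM (d : ℕ) (x : ℤ) : EuclideanSpace ℂ (Fin d) →L[ℂ] SeqSpace d :=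
  LinearMap.mkContinuous
    { toFun := fun v => lp.single 2 x v
      map_add' := fun v w => by
        apply lp.ext; funext j
        rw [lp.coeFn_add]
        simp only [Pi.add_apply, single_apply']
        split_ifs <;> simp
      map_smul' := fun c v => by
        simp }
    1 (fun v => by
      simpa using (lp.norm_single (p := 2) (by norm_num)
        (fun _ : ℤ => v) x).le)

@[simp] lemma singleCLM_apply (x : ℤ) (v : EuclideanSpace ℂ (Fin d)) :
    singleCLM d x v = lp.single 2 x v := rfl


lemma summable_u {α : ℝ} (hα : 1 < α) :
    Summable (fun z : ℤ => (|(z : ℝ)| + 1) ^ (-α)) := by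
  have base : Summable (fun n : ℕ => ((n : ℝ) + 1) ^ (-α)) := by
    have h : Summable (fun n : ℕ => (n : ℝ) ^ (-α)) :=
      Real.summable_nat_rpow.mpr (by linarith)
    have := h.comp_injective (add_left_injective 1)
    refine this.congr fun n => ?_
    simp [Function.comp]
  apply Summable.of_nat_of_neg
  · exact base.congr fun n => by
      rw [Int.cast_natCast, Nat.abs_cast]
  · refine base.congr fun n => ?_
    rw [Int.cast_neg, Int.cast_natCast, abs_neg, Nat.abs_cast]

lemma mixed_ineq {x y : ℤ} (h : ¬ ((0 ≤ x) ↔ (0 ≤ y))) :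
    (|(x : ℝ)| + 1) * (|(y : ℝ)| + 1) ≤ 2 * ((x : ℝ) - y) ^ 2 ∧ 1 ≤ |(x : ℝ) - y| := by
  have main : ∀ a b : ℝ, 0 ≤ a → 1 ≤ b →
      (|a| + 1) * (|(-b)| + 1) ≤ 2 * (a - -b) ^ 2 ∧ 1 ≤ |a - -b| := by
    intro a b ha hb
    rw [abs_neg, abs_of_nonneg ha, abs_of_nonneg (by linarith : (0:ℝ) ≤ b),
      abs_of_nonneg (by linarith : (0:ℝ) ≤ a - -b)]
    constructor <;> nlinarith
  by_cases hx : 0 ≤ x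
  · have hy : ¬ 0 ≤ y := fun hy => h (iff_of_true hx hy)
    have hy' : (1 : ℝ) ≤ -(y : ℝ) := by
      have h1 : y ≤ -1 := by omega
      have : (y : ℝ) ≤ -1 := by exact_mod_cast h1
      linarith
    have := main (x : ℝ) (-(y : ℝ)) (by exact_mod_cast hx) hy'
    simpa using this
  · have hy : 0 ≤ y := by
      by_contra hy; exact h (iff_of_false hx hy)
    have hx' : (1 : ℝ) ≤ -(x : ℝ) := by
      have h1 : x ≤ -1 := by omega
      have : (x : ℝ) ≤ -1 := by exact_mod_cast h1
      linarith
    have := main (y : ℝ) (-(x : ℝ)) (by exact_mod_cast hy) hx'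
    simp only [neg_neg] at this
    constructor
    · calc (|(x:ℝ)| + 1) * (|(y:ℝ)| + 1) = (|(y:ℝ)| + 1) * (|(x:ℝ)| + 1) := by ring
        _ ≤ 2 * ((y:ℝ) - x) ^ 2 := this.1
        _ = 2 * ((x:ℝ) - y) ^ 2 := by ring
    · rw [abs_sub_comm]; exact this.2

/-- the bound function squared, over the product space, is summable -/
lemma summable_G {c α : ℝ} (hc : 0 ≤ c) (hα : 1 < α) :
    Summable (fun p : ℤ × ℤ =>
      (if (0 ≤ p.1 ↔ 0 ≤ p.2) then (0:ℝ)
        else c * |(p.1 : ℝ) - p.2| ^ (-α)) ^ 2) := by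
  have hu := summable_u hα
  have hprod : Summable (fun p : ℤ × ℤ =>
      (|(p.1 : ℝ)| + 1) ^ (-α) * (|(p.2 : ℝ)| + 1) ^ (-α)) :=
    hu.mul_of_nonneg hu (fun z => Real.rpow_nonneg (by positivity) _)
      (fun z => Real.rpow_nonneg (by positivity) _)
  refine Summable.of_nonneg_of_le (fun p => sq_nonneg _) (fun p => ?_)
    ((hprod.mul_left (c ^ 2 * 2 ^ α)))
  obtain ⟨x, y⟩ := p
  dsimp only
  split_ifs with hxy
  · rw [zero_pow (by norm_num : (2:ℕ) ≠ 0)]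
    positivity
  · obtain ⟨h1, h2⟩ := mixed_ineq hxy
    have hb : (0:ℝ) < |(x : ℝ) - y| := by linarith
    have e1 : (c * |(x : ℝ) - y| ^ (-α)) ^ 2 = c ^ 2 * (|(x : ℝ) - y| ^ 2) ^ (-α) := by
      rw [mul_pow, ← Real.rpow_natCast (|(x:ℝ) - y| ^ (-α)) 2,
        ← Real.rpow_mul (abs_nonneg _), ← Real.rpow_natCast (|(x:ℝ) - y|) 2,
        ← Real.rpow_mul (abs_nonneg _)]
      ring_nf
    rw [e1]
    have e2 : (|(x : ℝ) - y| ^ 2) ^ (-α)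
        ≤ ((( |(x:ℝ)| + 1) * (|(y:ℝ)| + 1)) / 2) ^ (-α) := by
      apply Real.rpow_le_rpow_of_nonpos (by positivity)
      · rw [div_le_iff₀ (by norm_num), sq_abs]
        linarith
      · linarith
    have e3 : ((( |(x:ℝ)| + 1) * (|(y:ℝ)| + 1)) / 2) ^ (-α)
        = 2 ^ α * ((|(x : ℝ)| + 1) ^ (-α) * (|(y : ℝ)| + 1) ^ (-α)) := by
      rw [Real.div_rpow (by positivity) (by norm_num),
        Real.mul_rpow (by positivity) (by positivity),
        Real.rpow_neg (by norm_num : (0:ℝ) ≤ 2)]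
      field_simp
    calc c ^ 2 * (|(x : ℝ) - y| ^ 2) ^ (-α)
        ≤ c ^ 2 * ((( |(x:ℝ)| + 1) * (|(y:ℝ)| + 1)) / 2) ^ (-α) := by
          apply mul_le_mul_of_nonneg_left e2 (by positivity)
      _ = c ^ 2 * 2 ^ α * ((|(x : ℝ)| + 1) ^ (-α) * (|(y : ℝ)| + 1) ^ (-α)) := by
          rw [e3]; ring

end SeqAux


set_option maxHeartbeats 2000000 in
/-- If the block matrix elements of a bounded operator `W` on `ℓ²(ℤ) ⊗ ℂ^d`
satisfy `‖W(x,y)‖ ≤ c·|x-y|^{-α}` for `x ≠ y` with `α > 1`, then the commutator `[P, W]`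
with the half-line projection `P = P_{≥0}` is compact. -/
theorem polynomial_decay_implies_essentially_local
    (d : ℕ) (W P : SeqSpace d →L[ℂ] SeqSpace d)
    (w : ℤ → ℤ → Matrix (Fin d) (Fin d) ℂ)
    (c α : ℝ) (hα : 1 < α)
    (hdecay : ∀ x y : ℤ, x ≠ y →
      ‖Matrix.toEuclideanCLM (𝕜 := ℂ) (w x y)‖ ≤ c * |(x : ℝ) - (y : ℝ)| ^ (-α))
    (hW : ∀ (ψ : SeqSpace d) (x : ℤ),
      (W ψ : ∀ _ : ℤ, EuclideanSpace ℂ (Fin d)) x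
        = ∑' y : ℤ, Matrix.toEuclideanLin (w x y)
            ((ψ : ∀ _ : ℤ, EuclideanSpace ℂ (Fin d)) y))
    (hP : ∀ (ψ : SeqSpace d) (x : ℤ),
      (P ψ : ∀ _ : ℤ, EuclideanSpace ℂ (Fin d)) x
        = if 0 ≤ x then (ψ : ∀ _ : ℤ, EuclideanSpace ℂ (Fin d)) x else 0) :
    IsCompactOperator ⇑(P ∘L W - W ∘L P) := by
  classical
  set K : SeqSpace d →L[ℂ] SeqSpace d := P ∘L W - W ∘L P with hK
  -- c is nonnegative
  have hc : 0 ≤ c := by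
    have h := hdecay 0 1 (by norm_num)
    have h1 : |((0 : ℤ) : ℝ) - ((1 : ℤ) : ℝ)| ^ (-α) = 1 := by
      norm_num
    rw [h1, mul_one] at h
    exact le_trans (norm_nonneg _) h
  -- bound functions
  have hτ0 : ∀ x y : ℤ, (0:ℝ) ≤ c * |(x : ℝ) - y| ^ (-α) := fun x y =>
    mul_nonneg hc (Real.rpow_nonneg (abs_nonneg _) _)
  set g : ℤ → ℤ → ℝ := fun x y =>
    if (0 ≤ x ↔ 0 ≤ y) then 0 else c * |(x : ℝ) - y| ^ (-α) with hgdef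
  have hg0 : ∀ x y, 0 ≤ g x y := by
    intro x y
    simp only [hgdef]
    split_ifs
    · exact le_refl 0
    · exact hτ0 x y
  have hGsum : Summable (fun p : ℤ × ℤ => g p.1 p.2 ^ 2) := SeqAux.summable_G hc hα
  obtain ⟨hrow, hScol⟩ := (summable_prod_of_nonneg (fun p => sq_nonneg _)).mp hGsum
  set S : ℤ → ℝ := fun x => ∑' y, g x y ^ 2 with hSdef
  have hS0 : ∀ x, 0 ≤ S x := fun x => tsum_nonneg fun y => sq_nonneg _
  -- summability of rows of the full decay bound (with the diagonal included)
  have hτrow : ∀ x : ℤ, Summable (fun y : ℤ => (c * |(x : ℝ) - (y : ℝ)| ^ (-α)) ^ 2) := by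
    intro x
    have hF : Summable (fun z : ℤ => c ^ 2 * |(z : ℝ)| ^ (-(2 * α))) :=
      (Real.summable_abs_int_rpow (by linarith)).mul_left _
    have hinj : Function.Injective (fun y : ℤ => x - y) := fun a b h => by
      have h' : x - a = x - b := h
      omega
    have h2 := hF.comp_injective hinj
    refine h2.congr fun y => ?_
    show c ^ 2 * |((x - y : ℤ) : ℝ)| ^ (-(2 * α)) = (c * |(x : ℝ) - (y : ℝ)| ^ (-α)) ^ 2
    have hxy : ((x - y : ℤ) : ℝ) = (x : ℝ) - (y : ℝ) := by push_cast; ring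
    rw [hxy, mul_pow]
    congr 1
    rw [← Real.rpow_natCast (|(x : ℝ) - (y : ℝ)| ^ (-α)) 2, ← Real.rpow_mul (abs_nonneg _)]
    ring_nf
  ----------------------------------------------------------------
  -- Key coordinatewise bound
  ----------------------------------------------------------------
  have key : ∀ (ψ : SeqSpace d) (x : ℤ),
      ‖(K ψ : ∀ _ : ℤ, EuclideanSpace ℂ (Fin d)) x‖ ≤ Real.sqrt (S x) * ‖ψ‖ := by
    intro ψ x
    have hnp0 : ∀ y : ℤ, (0:ℝ) ≤ ‖(ψ : ∀ _ : ℤ, EuclideanSpace ℂ (Fin d)) y‖ :=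
      fun y => norm_nonneg _
    have hnp2 : Summable (fun y : ℤ => ‖(ψ : ∀ _ : ℤ, EuclideanSpace ℂ (Fin d)) y‖ ^ 2) := by
      have h := (lp.memℓp ψ).summable (by norm_num : 0 < (2 : ℝ≥0∞).toReal)
      refine h.congr fun y => ?_
      rw [show ((2 : ℝ≥0∞)).toReal = ((2 : ℕ) : ℝ) by norm_num, Real.rpow_natCast]
    -- bound on individual terms off the diagonal
    have hbound : ∀ y : ℤ, x ≠ y →
        ‖Matrix.toEuclideanLin (w x y) ((ψ : ∀ _ : ℤ, EuclideanSpace ℂ (Fin d)) y)‖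
          ≤ (c * |(x : ℝ) - y| ^ (-α)) * ‖(ψ : ∀ _ : ℤ, EuclideanSpace ℂ (Fin d)) y‖ := by
      intro y hne
      have e : Matrix.toEuclideanLin (w x y) ((ψ : ∀ _ : ℤ, EuclideanSpace ℂ (Fin d)) y)
          = Matrix.toEuclideanCLM (𝕜 := ℂ) (w x y)
              ((ψ : ∀ _ : ℤ, EuclideanSpace ℂ (Fin d)) y) := by
        rw [← Matrix.coe_toEuclideanCLM_eq_toEuclideanLin]; rfl
      rw [e]
      calc ‖Matrix.toEuclideanCLM (𝕜 := ℂ) (w x y)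
              ((ψ : ∀ _ : ℤ, EuclideanSpace ℂ (Fin d)) y)‖
          ≤ ‖Matrix.toEuclideanCLM (𝕜 := ℂ) (w x y)‖
            * ‖(ψ : ∀ _ : ℤ, EuclideanSpace ℂ (Fin d)) y‖ :=
            ContinuousLinearMap.le_opNorm _ _
        _ ≤ (c * |(x : ℝ) - y| ^ (-α)) * ‖(ψ : ∀ _ : ℤ, EuclideanSpace ℂ (Fin d)) y‖ :=
            mul_le_mul_of_nonneg_right (hdecay x y hne) (hnp0 y)
    -- a dominating summable function for the terms (including the diagonal)
    have hτnp : Summable (fun y : ℤ => (c * |(x : ℝ) - y| ^ (-α))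
        * ‖(ψ : ∀ _ : ℤ, EuclideanSpace ℂ (Fin d)) y‖) :=
      cs_summable _ _ (hτ0 x) hnp0 (hτrow x) hnp2
    have hmsum : Summable (fun y : ℤ => (c * |(x : ℝ) - y| ^ (-α))
        * ‖(ψ : ∀ _ : ℤ, EuclideanSpace ℂ (Fin d)) y‖
        + if y = x then ‖Matrix.toEuclideanCLM (𝕜 := ℂ) (w x x)‖
            * ‖(ψ : ∀ _ : ℤ, EuclideanSpace ℂ (Fin d)) x‖ else 0) := by
      refine hτnp.add (summable_of_ne_finset_zero (s := {x}) fun y hy => ?_)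
      simp only [Finset.mem_singleton] at hy
      simp [hy]
    have ham : ∀ y : ℤ,
        ‖Matrix.toEuclideanLin (w x y) ((ψ : ∀ _ : ℤ, EuclideanSpace ℂ (Fin d)) y)‖
        ≤ (c * |(x : ℝ) - y| ^ (-α)) * ‖(ψ : ∀ _ : ℤ, EuclideanSpace ℂ (Fin d)) y‖
          + if y = x then ‖Matrix.toEuclideanCLM (𝕜 := ℂ) (w x x)‖
              * ‖(ψ : ∀ _ : ℤ, EuclideanSpace ℂ (Fin d)) x‖ else 0 := by
      intro y
      by_cases hyx : y = x
      · subst hyx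
        have e : Matrix.toEuclideanLin (w y y) ((ψ : ∀ _ : ℤ, EuclideanSpace ℂ (Fin d)) y)
            = Matrix.toEuclideanCLM (𝕜 := ℂ) (w y y)
                ((ψ : ∀ _ : ℤ, EuclideanSpace ℂ (Fin d)) y) := by
          rw [← Matrix.coe_toEuclideanCLM_eq_toEuclideanLin]; rfl
        rw [e, if_pos rfl]
        have h1 := ContinuousLinearMap.le_opNorm
          (Matrix.toEuclideanCLM (𝕜 := ℂ) (w y y)) ((ψ : ∀ _ : ℤ, EuclideanSpace ℂ (Fin d)) y)
        have h2 := mul_nonneg (hτ0 y y) (hnp0 y)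
        linarith
      · rw [if_neg hyx, add_zero]
        exact hbound y (fun h => hyx h.symm)
    have hasum : Summable (fun y : ℤ =>
        Matrix.toEuclideanLin (w x y) ((ψ : ∀ _ : ℤ, EuclideanSpace ℂ (Fin d)) y)) :=
      Summable.of_norm_bounded hmsum ham
    have hbnorm : ∀ y : ℤ,
        ‖if 0 ≤ y then Matrix.toEuclideanLin (w x y)
            ((ψ : ∀ _ : ℤ, EuclideanSpace ℂ (Fin d)) y) else 0‖
        ≤ (c * |(x : ℝ) - y| ^ (-α)) * ‖(ψ : ∀ _ : ℤ, EuclideanSpace ℂ (Fin d)) y‖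
          + if y = x then ‖Matrix.toEuclideanCLM (𝕜 := ℂ) (w x x)‖
              * ‖(ψ : ∀ _ : ℤ, EuclideanSpace ℂ (Fin d)) x‖ else 0 := by
      intro y
      split_ifs with hy hyx hyx
      · exact (if_pos hyx ▸ ham y : _)
      · exact (if_neg hyx ▸ ham y : _)
      · rw [norm_zero]
        have h2 := mul_nonneg (hτ0 x y) (hnp0 y)
        have h3 : (0:ℝ) ≤ ‖Matrix.toEuclideanCLM (𝕜 := ℂ) (w x x)‖
            * ‖(ψ : ∀ _ : ℤ, EuclideanSpace ℂ (Fin d)) x‖ :=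
          mul_nonneg (norm_nonneg _) (hnp0 x)
        linarith
      · rw [norm_zero]
        have h2 := mul_nonneg (hτ0 x y) (hnp0 y)
        linarith
    have hbsum : Summable (fun y : ℤ =>
        if 0 ≤ y then Matrix.toEuclideanLin (w x y)
          ((ψ : ∀ _ : ℤ, EuclideanSpace ℂ (Fin d)) y) else 0) :=
      Summable.of_norm_bounded hmsum hbnorm
    -- coordinate formula for K ψ
    have hKc : (K ψ : ∀ _ : ℤ, EuclideanSpace ℂ (Fin d)) x
        = (if 0 ≤ x then ∑' y : ℤ, Matrix.toEuclideanLin (w x y)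
              ((ψ : ∀ _ : ℤ, EuclideanSpace ℂ (Fin d)) y) else 0)
          - ∑' y : ℤ, (if 0 ≤ y then Matrix.toEuclideanLin (w x y)
              ((ψ : ∀ _ : ℤ, EuclideanSpace ℂ (Fin d)) y) else 0) := by
      have h1 : K ψ = P (W ψ) - W (P ψ) := by
        rw [hK]; simp
      rw [h1, lp.coeFn_sub, Pi.sub_apply, hP (W ψ) x, hW (P ψ) x, hW ψ x]
      congr 1
      apply tsum_congr
      intro y
      rw [hP ψ y]
      split_ifs with hy
      · rfl
      · exact map_zero _
    -- row summability for g * np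
    have hgnp : Summable (fun y : ℤ =>
        g x y * ‖(ψ : ∀ _ : ℤ, EuclideanSpace ℂ (Fin d)) y‖) :=
      cs_summable _ _ (hg0 x) hnp0 (hrow x) hnp2
    have hmain : ‖(K ψ : ∀ _ : ℤ, EuclideanSpace ℂ (Fin d)) x‖
        ≤ ∑' y, g x y * ‖(ψ : ∀ _ : ℤ, EuclideanSpace ℂ (Fin d)) y‖ := by
      rw [hKc]
      by_cases hx : 0 ≤ x
      · rw [if_pos hx, ← Summable.tsum_sub hasum hbsum]
        have h2 : ∀ y : ℤ,
            ‖Matrix.toEuclideanLin (w x y) ((ψ : ∀ _ : ℤ, EuclideanSpace ℂ (Fin d)) y)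
              - (if 0 ≤ y then Matrix.toEuclideanLin (w x y)
                  ((ψ : ∀ _ : ℤ, EuclideanSpace ℂ (Fin d)) y) else 0)‖
            ≤ g x y * ‖(ψ : ∀ _ : ℤ, EuclideanSpace ℂ (Fin d)) y‖ := by
          intro y
          split_ifs with hy
          · rw [sub_self, norm_zero]
            exact mul_nonneg (hg0 x y) (hnp0 y)
          · rw [sub_zero]
            have hxy : x ≠ y := by omega
            have hgxy : g x y = c * |(x : ℝ) - y| ^ (-α) := by
              simp only [hgdef]
              rw [if_neg]
              intro hiff
              exact hy (hiff.mp hx)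
            rw [hgxy]
            exact hbound y hxy
        have hnorms : Summable (fun y : ℤ =>
            ‖Matrix.toEuclideanLin (w x y) ((ψ : ∀ _ : ℤ, EuclideanSpace ℂ (Fin d)) y)
              - (if 0 ≤ y then Matrix.toEuclideanLin (w x y)
                  ((ψ : ∀ _ : ℤ, EuclideanSpace ℂ (Fin d)) y) else 0)‖) :=
          Summable.of_nonneg_of_le (fun y => norm_nonneg _) h2 hgnp
        calc ‖∑' y : ℤ, (Matrix.toEuclideanLin (w x y)
                ((ψ : ∀ _ : ℤ, EuclideanSpace ℂ (Fin d)) y)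
              - (if 0 ≤ y then Matrix.toEuclideanLin (w x y)
                  ((ψ : ∀ _ : ℤ, EuclideanSpace ℂ (Fin d)) y) else 0))‖
            ≤ ∑' y : ℤ, ‖Matrix.toEuclideanLin (w x y)
                ((ψ : ∀ _ : ℤ, EuclideanSpace ℂ (Fin d)) y)
              - (if 0 ≤ y then Matrix.toEuclideanLin (w x y)
                  ((ψ : ∀ _ : ℤ, EuclideanSpace ℂ (Fin d)) y) else 0)‖ :=
              norm_tsum_le_tsum_norm hnorms
          _ ≤ ∑' y, g x y * ‖(ψ : ∀ _ : ℤ, EuclideanSpace ℂ (Fin d)) y‖ :=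
              Summable.tsum_le_tsum h2 hnorms hgnp
      · rw [if_neg hx, zero_sub, norm_neg]
        have h2 : ∀ y : ℤ,
            ‖if 0 ≤ y then Matrix.toEuclideanLin (w x y)
                ((ψ : ∀ _ : ℤ, EuclideanSpace ℂ (Fin d)) y) else 0‖
            ≤ g x y * ‖(ψ : ∀ _ : ℤ, EuclideanSpace ℂ (Fin d)) y‖ := by
          intro y
          split_ifs with hy
          · have hxy : x ≠ y := by omega
            have hgxy : g x y = c * |(x : ℝ) - y| ^ (-α) := by
              simp only [hgdef]
              rw [if_neg]
              intro hiff
              exact hx (hiff.mpr hy)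
            rw [hgxy]
            exact hbound y hxy
          · rw [norm_zero]
            exact mul_nonneg (hg0 x y) (hnp0 y)
        have hnorms : Summable (fun y : ℤ =>
            ‖if 0 ≤ y then Matrix.toEuclideanLin (w x y)
                ((ψ : ∀ _ : ℤ, EuclideanSpace ℂ (Fin d)) y) else 0‖) :=
          Summable.of_nonneg_of_le (fun y => norm_nonneg _) h2 hgnp
        calc ‖∑' y : ℤ, (if 0 ≤ y then Matrix.toEuclideanLin (w x y)
                ((ψ : ∀ _ : ℤ, EuclideanSpace ℂ (Fin d)) y) else 0)‖
            ≤ ∑' y : ℤ, ‖if 0 ≤ y then Matrix.toEuclideanLin (w x y)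
                ((ψ : ∀ _ : ℤ, EuclideanSpace ℂ (Fin d)) y) else 0‖ :=
              norm_tsum_le_tsum_norm hnorms
          _ ≤ ∑' y, g x y * ‖(ψ : ∀ _ : ℤ, EuclideanSpace ℂ (Fin d)) y‖ :=
              Summable.tsum_le_tsum h2 hnorms hgnp
    -- Cauchy–Schwarz
    have hcs := cs_tsum (g x) (fun y => ‖(ψ : ∀ _ : ℤ, EuclideanSpace ℂ (Fin d)) y‖)
      (hg0 x) hnp0 (hrow x) hnp2
    have hψnorm : Real.sqrt (∑' y : ℤ, ‖(ψ : ∀ _ : ℤ, EuclideanSpace ℂ (Fin d)) y‖ ^ 2)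
        = ‖ψ‖ := by
      have h := lp.norm_rpow_eq_tsum (p := 2) (by norm_num) ψ
      rw [show ((2 : ℝ≥0∞)).toReal = ((2 : ℕ) : ℝ) by norm_num] at h
      simp_rw [Real.rpow_natCast] at h
      rw [← h, Real.sqrt_sq (norm_nonneg _)]
    calc ‖(K ψ : ∀ _ : ℤ, EuclideanSpace ℂ (Fin d)) x‖
        ≤ ∑' y, g x y * ‖(ψ : ∀ _ : ℤ, EuclideanSpace ℂ (Fin d)) y‖ := hmain
      _ ≤ Real.sqrt (∑' y, g x y ^ 2)
          * Real.sqrt (∑' y, ‖(ψ : ∀ _ : ℤ, EuclideanSpace ℂ (Fin d)) y‖ ^ 2) := hcs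
      _ = Real.sqrt (S x) * ‖ψ‖ := by rw [hψnorm]
  ----------------------------------------------------------------
  -- finite-rank approximations
  ----------------------------------------------------------------
  set T : Finset ℤ → (SeqSpace d →L[ℂ] SeqSpace d) := fun s =>
    ∑ x ∈ s, (SeqAux.singleCLM d x) ∘L ((SeqAux.evalCLM d x) ∘L K) with hT
  have hTcoord : ∀ (s : Finset ℤ) (ψ : SeqSpace d) (x' : ℤ),
      ((T s) ψ : ∀ _ : ℤ, EuclideanSpace ℂ (Fin d)) x'
        = if x' ∈ s then (K ψ : ∀ _ : ℤ, EuclideanSpace ℂ (Fin d)) x' else 0 := by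
    intro s ψ x'
    rw [hT]
    simp only [ContinuousLinearMap.sum_apply, ContinuousLinearMap.comp_apply,
      SeqAux.singleCLM_apply, SeqAux.evalCLM_apply]
    rw [lp.coeFn_sum, Finset.sum_apply]
    rw [Finset.sum_congr rfl (fun x _ => SeqAux.single_apply' x x'
      ((K ψ : ∀ _ : ℤ, EuclideanSpace ℂ (Fin d)) x))]
    exact Finset.sum_ite_eq s x' _
  -- compactness of the approximants
  have hcompact : ∀ s : Finset ℤ, IsCompactOperator ⇑(T s) := by
    intro s
    have hmem : T s ∈ compactOperator (RingHom.id ℂ) (SeqSpace d) (SeqSpace d) := by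
      rw [hT]
      apply Submodule.sum_mem
      intro x _
      show IsCompactOperator ⇑((SeqAux.singleCLM d x) ∘L ((SeqAux.evalCLM d x) ∘L K))
      have h1 : IsCompactOperator ⇑((SeqAux.evalCLM d x) ∘L K) := isCompactOperator_findim _
      have h2 := h1.clm_comp (SeqAux.singleCLM d x)
      rwa [ContinuousLinearMap.coe_comp'] at *
    exact hmem
  -- norm bound on the difference
  have hdiff : ∀ (s : Finset ℤ) (ψ : SeqSpace d),
      ‖(K - T s) ψ‖ ≤ Real.sqrt (∑' x : {x : ℤ // x ∉ s}, S x) * ‖ψ‖ := by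
    intro s ψ
    set tail : ℝ := ∑' x : {x : ℤ // x ∉ s}, S x with htl
    have htail0 : 0 ≤ tail := tsum_nonneg fun _ => hS0 _
    have hφc : ∀ x : ℤ, ((K - T s) ψ : ∀ _ : ℤ, EuclideanSpace ℂ (Fin d)) x
        = if x ∈ s then 0 else (K ψ : ∀ _ : ℤ, EuclideanSpace ℂ (Fin d)) x := by
      intro x
      rw [ContinuousLinearMap.sub_apply, lp.coeFn_sub, Pi.sub_apply, hTcoord s ψ x]
      split_ifs with hx
      · exact sub_self _
      · exact sub_zero _
    -- summability of coordinates squared for a lp element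
    have hφ2 : Summable (fun x : ℤ =>
        ‖((K - T s) ψ : ∀ _ : ℤ, EuclideanSpace ℂ (Fin d)) x‖ ^ 2) := by
      have h := (lp.memℓp ((K - T s) ψ)).summable (by norm_num : 0 < (2 : ℝ≥0∞).toReal)
      refine h.congr fun y => ?_
      rw [show ((2 : ℝ≥0∞)).toReal = ((2 : ℕ) : ℝ) by norm_num, Real.rpow_natCast]
    have hnormsq : ‖(K - T s) ψ‖ ^ 2
        = ∑' x : ℤ, ‖((K - T s) ψ : ∀ _ : ℤ, EuclideanSpace ℂ (Fin d)) x‖ ^ 2 := by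
      have h := lp.norm_rpow_eq_tsum (p := 2) (by norm_num) ((K - T s) ψ)
      rw [show ((2 : ℝ≥0∞)).toReal = ((2 : ℕ) : ℝ) by norm_num] at h
      simp_rw [Real.rpow_natCast] at h
      exact h
    have hSsub : Summable (fun x : ℤ => (if x ∈ s then 0 else S x) * ‖ψ‖ ^ 2) := by
      refine Summable.mul_right _ ?_
      refine Summable.of_nonneg_of_le (fun x => ?_) (fun x => ?_) hScol
      · split_ifs
        · exact le_refl 0
        · exact hS0 x
      · split_ifs
        · exact hS0 x
        · exact le_refl _
    have hb : ∀ x : ℤ, ‖((K - T s) ψ : ∀ _ : ℤ, EuclideanSpace ℂ (Fin d)) x‖ ^ 2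
        ≤ (if x ∈ s then 0 else S x) * ‖ψ‖ ^ 2 := by
      intro x
      rw [hφc x]
      split_ifs with hx
      · simp
      · have h1 := key ψ x
        have h2 : ‖(K ψ : ∀ _ : ℤ, EuclideanSpace ℂ (Fin d)) x‖ ^ 2
            ≤ (Real.sqrt (S x) * ‖ψ‖) ^ 2 := by
          apply sq_le_sq' _ h1
          have := norm_nonneg ((K ψ : ∀ _ : ℤ, EuclideanSpace ℂ (Fin d)) x)
          nlinarith [mul_nonneg (Real.sqrt_nonneg (S x)) (norm_nonneg ψ)]
        calc ‖(K ψ : ∀ _ : ℤ, EuclideanSpace ℂ (Fin d)) x‖ ^ 2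
            ≤ (Real.sqrt (S x) * ‖ψ‖) ^ 2 := h2
          _ = S x * ‖ψ‖ ^ 2 := by
              rw [mul_pow, Real.sq_sqrt (hS0 x)]
    have htsum_ite : ∑' x : ℤ, (if x ∈ s then 0 else S x) * ‖ψ‖ ^ 2
        = tail * ‖ψ‖ ^ 2 := by
      rw [htl, tsum_mul_right]
      congr 1
      have h1 : ∀ x : ℤ, (if x ∈ s then 0 else S x)
          = Set.indicator {x : ℤ | x ∉ s} S x := by
        intro x
        rw [Set.indicator_apply]
        simp only [Set.mem_setOf_eq]
        split_ifs with h1 h2 h2 <;> first | rfl | exact absurd h1 h2 | exact absurd h2 h1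
      rw [tsum_congr h1, ← tsum_subtype {x : ℤ | x ∉ s} S]
      rfl
    have hsq : ‖(K - T s) ψ‖ ^ 2 ≤ tail * ‖ψ‖ ^ 2 := by
      rw [hnormsq, ← htsum_ite]
      exact Summable.tsum_le_tsum hb hφ2 hSsub
    have := Real.sqrt_le_sqrt hsq
    rw [Real.sqrt_sq (norm_nonneg _), Real.sqrt_mul htail0, Real.sqrt_sq (norm_nonneg _)]
      at this
    exact this
  have hop : ∀ s : Finset ℤ, ‖T s - K‖ ≤ Real.sqrt (∑' x : {x : ℤ // x ∉ s}, S x) := by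
    intro s
    rw [← neg_sub, norm_neg]
    exact ContinuousLinearMap.opNorm_le_bound _ (Real.sqrt_nonneg _) (hdiff s)
  -- convergence
  have htail := tendsto_tsum_compl_atTop_zero S
  have hsqrt : Filter.Tendsto (fun s : Finset ℤ =>
      Real.sqrt (∑' x : {x : ℤ // x ∉ s}, S x)) Filter.atTop (nhds 0) := by
    have h := (Real.continuous_sqrt.tendsto 0).comp htail
    simpa [Function.comp_def] using h
  have hTK : Filter.Tendsto T Filter.atTop (nhds K) := by
    rw [tendsto_iff_norm_sub_tendsto_zero]
    exact squeeze_zero (fun s => norm_nonneg _) hop hsqrt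
  exact isCompactOperator_of_tendsto hTK (Filter.Eventually.of_forall hcompact)
end

section
/- Let U be a unitary on a Hilbert space H = H₊ ⊕ H₋ with chiral symmetry γ = 1 ⊕ (-1) satisfying γU = U*γ, with block form U = [[A,B],[-B*,D]]. Then ker(U - U*) = ker(B*) ⊕ ker(B), and consequently tr_{ker(U-U*)} γ = dim ker(B*) - dim ker(B); if B is Fredholm, this equals minus the Fredholm index of B. -/
open scoped InnerProductSpace
open ContinuousLinearMap

/-- Auxiliary: a product submodule is linearly equivalent to the product of the
submodules. -/
def submoduleProdEquivAux {R M N : Type*} [Ring R] [AddCommGroup M] [AddCommGroup N]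
    [Module R M] [Module R N] (p : Submodule R M) (q : Submodule R N) :
    (p.prod q) ≃ₗ[R] p × q where
  toFun x := (⟨(x : M × N).1, x.2.1⟩, ⟨(x : M × N).2, x.2.2⟩)
  invFun y := ⟨((y.1 : M), (y.2 : N)), ⟨y.1.2, y.2.2⟩⟩
  map_add' x y := rfl
  map_smul' c x := rfl
  left_inv x := rfl
  right_inv y := rfl

set_option maxHeartbeats 1600000 in
/-- Let `U` be a unitary on the Hilbert space `H = Hp ⊕ Hm` (orthogonal
direct sum, modelled as `WithLp 2 (Hp × Hm)`) with chiral symmetry `γ = 1 ⊕ (-1)`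
satisfying `γU = U*γ`, and with block form `U = [[A,B],[-B*,D]]`. Then
`ker(U - U*) = ker(B*) ⊕ ker(B)`, and the trace of `γ` restricted to this kernel equals
`dim ker(B*) - dim ker(B)`, i.e. minus the Fredholm index of `B` when `B` is Fredholm. -/
theorem chiral_kernel_decomposition_and_trace
    {Hp Hm : Type*}
    [NormedAddCommGroup Hp] [InnerProductSpace ℂ Hp] [CompleteSpace Hp]
    [NormedAddCommGroup Hm] [InnerProductSpace ℂ Hm] [CompleteSpace Hm]
    (A : Hp →L[ℂ] Hp) (B : Hm →L[ℂ] Hp) (D : Hm →L[ℂ] Hm)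
    (U : WithLp 2 (Hp × Hm) →L[ℂ] WithLp 2 (Hp × Hm))
    (e : WithLp 2 (Hp × Hm) ≃ₗ[ℂ] Hp × Hm)
    (he : e = WithLp.linearEquiv 2 ℂ (Hp × Hm))
    (hblocks : ∀ v : WithLp 2 (Hp × Hm),
      e (U v) = (A (e v).1 + B (e v).2, -(adjoint B) (e v).1 + D (e v).2))
    (hunit : adjoint U ∘L U = 1 ∧ U ∘L adjoint U = 1)
    (hchiral : ∀ v : WithLp 2 (Hp × Hm),
      e (adjoint U (e.symm ((e v).1, -(e v).2)))
        = ((e (U v)).1, -(e (U v)).2)) :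
    (LinearMap.ker ((U - adjoint U : WithLp 2 (Hp × Hm) →L[ℂ] WithLp 2 (Hp × Hm)) : WithLp 2 (Hp × Hm) →ₗ[ℂ] WithLp 2 (Hp × Hm))
      = ((LinearMap.ker (adjoint B : Hp →ₗ[ℂ] Hm)).prod (LinearMap.ker (B : Hm →ₗ[ℂ] Hp))).comap e.toLinearMap) ∧
    (∀ (_ : FiniteDimensional ℂ (LinearMap.ker (adjoint B : Hp →ₗ[ℂ] Hm)))
       (_ : FiniteDimensional ℂ (LinearMap.ker (B : Hm →ₗ[ℂ] Hp))),
      ∃ γN : (LinearMap.ker ((U - adjoint U : WithLp 2 (Hp × Hm) →L[ℂ] WithLp 2 (Hp × Hm)) : WithLp 2 (Hp × Hm) →ₗ[ℂ] WithLp 2 (Hp × Hm)))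
          →ₗ[ℂ] (LinearMap.ker ((U - adjoint U : WithLp 2 (Hp × Hm) →L[ℂ] WithLp 2 (Hp × Hm)) : WithLp 2 (Hp × Hm) →ₗ[ℂ] WithLp 2 (Hp × Hm))),
        (∀ v, e ((γN v : WithLp 2 (Hp × Hm))) = ((e (v : WithLp 2 (Hp × Hm))).1,
            -(e (v : WithLp 2 (Hp × Hm))).2)) ∧
        LinearMap.trace ℂ (LinearMap.ker ((U - adjoint U : WithLp 2 (Hp × Hm) →L[ℂ] WithLp 2 (Hp × Hm)) : WithLp 2 (Hp × Hm) →ₗ[ℂ] WithLp 2 (Hp × Hm))) γN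
          = ((Module.finrank ℂ (LinearMap.ker (adjoint B : Hp →ₗ[ℂ] Hm)) : ℂ)
              - (Module.finrank ℂ (LinearMap.ker (B : Hm →ₗ[ℂ] Hp)) : ℂ))) := by
  -- blocks of the adjoint
  have hadj : ∀ w : WithLp 2 (Hp × Hm),
      e (adjoint U w) = (A (e w).1 - B (e w).2, adjoint B (e w).1 + D (e w).2) := by
    intro w
    have h := hchiral (e.symm ((e w).1, -(e w).2))
    rw [hblocks (e.symm ((e w).1, -(e w).2))] at h
    simp only [e.apply_symm_apply, neg_neg, Prod.mk.eta, e.symm_apply_apply] at h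
    rw [h]
    ext <;> simp <;> abel
  -- the difference
  have hdiff : ∀ v : WithLp 2 (Hp × Hm),
      e ((U - adjoint U) v) = (B (e v).2 + B (e v).2,
        -(adjoint B (e v).1) - adjoint B (e v).1) := by
    intro v
    rw [ContinuousLinearMap.sub_apply, map_sub, hblocks v, hadj v]
    ext <;> simp
  -- kernel membership characterization
  have hker : ∀ v : WithLp 2 (Hp × Hm),
      (U - adjoint U) v = 0 ↔ (adjoint B (e v).1 = 0 ∧ B (e v).2 = 0) := by
    intro v
    rw [← e.map_eq_zero_iff, hdiff v, Prod.ext_iff]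
    constructor
    · rintro ⟨h1, h2⟩
      have h1' : (2 : ℂ) • B (e v).2 = 0 := by rw [two_smul]; exact h1
      have h2' : (2 : ℂ) • adjoint B (e v).1 = 0 := by
        rw [two_smul]
        have := neg_eq_zero.mpr (show -(adjoint B (e v).1) - adjoint B (e v).1 = 0 from h2)
        simpa [neg_sub, sub_neg_eq_add] using this
      constructor
      · simpa using (smul_eq_zero.mp h2').resolve_left (by norm_num)
      · simpa using (smul_eq_zero.mp h1').resolve_left (by norm_num)
    · rintro ⟨h1, h2⟩
      simp [h1, h2]
  have hkereq : LinearMap.ker ((U - adjoint U : WithLp 2 (Hp × Hm) →L[ℂ] WithLp 2 (Hp × Hm)) : WithLp 2 (Hp × Hm) →ₗ[ℂ] WithLp 2 (Hp × Hm))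
      = ((LinearMap.ker (adjoint B : Hp →ₗ[ℂ] Hm)).prod (LinearMap.ker (B : Hm →ₗ[ℂ] Hp))).comap e.toLinearMap := by
    ext v
    simp only [LinearMap.mem_ker, Submodule.mem_comap, Submodule.mem_prod,
      LinearEquiv.coe_coe, ContinuousLinearMap.coe_coe]
    exact (hker v).trans (by simp [LinearMap.mem_ker])
  refine ⟨hkereq, ?_⟩
  intro hfK hfL
  -- the chiral symmetry as a linear map on the whole space
  set γ0 : WithLp 2 (Hp × Hm) →ₗ[ℂ] WithLp 2 (Hp × Hm) :=
    e.symm.toLinearMap ∘ₗ (LinearMap.prodMap LinearMap.id (-LinearMap.id)) ∘ₗ e.toLinearMap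
    with hγ0
  have hγ0app : ∀ v : WithLp 2 (Hp × Hm), e (γ0 v) = ((e v).1, -(e v).2) := by
    intro v
    simp [hγ0]
  set N : Submodule ℂ (WithLp 2 (Hp × Hm)) :=
    LinearMap.ker ((U - adjoint U : WithLp 2 (Hp × Hm) →L[ℂ] WithLp 2 (Hp × Hm)) : WithLp 2 (Hp × Hm) →ₗ[ℂ] WithLp 2 (Hp × Hm)) with hN
  have hmaps : ∀ v ∈ N, γ0 v ∈ N := by
    intro v hv
    have hv' := (hker v).mp hv
    refine (hker (γ0 v)).mpr ?_
    rw [hγ0app v]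
    exact ⟨hv'.1, by simp [hv'.2]⟩
  set γN : N →ₗ[ℂ] N := γ0.restrict hmaps with hγN
  have hγNapp : ∀ v : N, e ((γN v : WithLp 2 (Hp × Hm)))
      = ((e (v : WithLp 2 (Hp × Hm))).1, -(e (v : WithLp 2 (Hp × Hm))).2) := by
    intro v
    rw [hγN]
    exact hγ0app v
  refine ⟨γN, hγNapp, ?_⟩
  -- the equivalence between N and ker B* × ker B
  set K : Submodule ℂ Hp := LinearMap.ker (adjoint B : Hp →ₗ[ℂ] Hm) with hK
  set L : Submodule ℂ Hm := LinearMap.ker (B : Hm →ₗ[ℂ] Hp) with hL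
  have hmapeq : N.map e.toLinearMap = K.prod L := by
    rw [hkereq]
    exact Submodule.map_comap_eq_of_surjective e.surjective _
  set ψ : N ≃ₗ[ℂ] K × L :=
    ((e.submoduleMap N).trans (LinearEquiv.ofEq _ _ hmapeq)).trans
      (submoduleProdEquivAux K L) with hψ
  have hψ1 : ∀ v : N, ((ψ v).1 : Hp) = (e (v : WithLp 2 (Hp × Hm))).1 := by
    intro v; rfl
  have hψ2 : ∀ v : N, ((ψ v).2 : Hm) = (e (v : WithLp 2 (Hp × Hm))).2 := by
    intro v; rfl
  have hconj : ψ.conj γN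
      = LinearMap.prodMap (LinearMap.id : K →ₗ[ℂ] K) (-LinearMap.id : L →ₗ[ℂ] L) := by
    apply LinearMap.ext
    intro y
    have hy : ψ (ψ.symm y) = y := ψ.apply_symm_apply y
    have h1 := hγNapp (ψ.symm y)
    apply Prod.ext
    · apply Subtype.ext
      have : ((ψ (γN (ψ.symm y))).1 : Hp) = (e ((γN (ψ.symm y) : N) : WithLp 2 (Hp × Hm))).1 :=
        hψ1 _
      rw [LinearEquiv.conj_apply]
      simp only [LinearMap.coe_comp, Function.comp_apply, LinearEquiv.coe_coe]
      rw [show ((ψ (γN (ψ.symm y))).1 : Hp)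
          = (e ((γN (ψ.symm y) : N) : WithLp 2 (Hp × Hm))).1 from hψ1 _, h1]
      simp only [LinearMap.prodMap_apply, LinearMap.id_apply]
      rw [← hψ1 (ψ.symm y), hy]
    · apply Subtype.ext
      rw [LinearEquiv.conj_apply]
      simp only [LinearMap.coe_comp, Function.comp_apply, LinearEquiv.coe_coe]
      rw [show ((ψ (γN (ψ.symm y))).2 : Hm)
          = (e ((γN (ψ.symm y) : N) : WithLp 2 (Hp × Hm))).2 from hψ2 _, h1]
      simp only [LinearMap.prodMap_apply, LinearMap.neg_apply, LinearMap.id_apply]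
      rw [show (e ((ψ.symm y : N) : WithLp 2 (Hp × Hm))).2 = ((ψ (ψ.symm y)).2 : Hm)
          from (hψ2 _).symm, hy]
      rfl
  have htr : LinearMap.trace ℂ _ γN = LinearMap.trace ℂ _ (ψ.conj γN) :=
    (LinearMap.trace_conj' γN ψ).symm
  rw [htr, hconj, LinearMap.trace_prodMap', LinearMap.trace_id, map_neg,
    LinearMap.trace_id]
  ring
end

section
/- Let B be a finite-dimensional unitary matrix commuting with an antiunitary operator η' satisfying η'² = -1. Then det(B) = 1. Moreover, every eigenvalue of B has the property that its complex conjugate is also an eigenvalue with the same multiplicity, and every real eigenvalue (±1) has even multiplicity. -/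
open Module Polynomial

lemma evenAux (k : ℕ) : ∀ (V : Type) [AddCommGroup V] [Module ℂ V] [FiniteDimensional ℂ V]
    (J : V → V), (∀ x y, J (x+y) = J x + J y) →
    (∀ (c : ℂ) (x : V), J (c•x) = (starRingEnd ℂ c) • J x) →
    (∀ x, J (J x) = -x) → finrank ℂ V = k → Even k := by
  induction k using Nat.strong_induction_on with
  | _ k IH =>
    intro V _ _ _ J hadd hsmul hsq hk
    rcases Nat.eq_zero_or_pos k with h0 | hpos
    · simp [h0]
    have hJ0 : J 0 = 0 := by
      have := hadd 0 0; simpa using this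
    have hJneg : ∀ x : V, J (-x) = - J x := by
      intro x
      have h := hsmul (-1) x
      simpa using h
    have hJsub : ∀ x y : V, J (x - y) = J x - J y := by
      intro x y
      rw [sub_eq_add_neg, hadd, hJneg, sub_eq_add_neg]
    have : Nontrivial V := Module.nontrivial_of_finrank_pos (R := ℂ) (by omega)
    obtain ⟨v, hv⟩ := exists_ne (0 : V)
    have hli : LinearIndependent ℂ ![v, J v] := by
      rw [LinearIndependent.pair_iff]
      intro s t hst
      have h2 : (starRingEnd ℂ s) • J v + (starRingEnd ℂ t) • (-v) = 0 := by
        have := congrArg J hst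
        rw [hadd, hsmul, hsmul, hsq, hJ0] at this
        simpa using this
      have h5 : ((starRingEnd ℂ s) * s + (starRingEnd ℂ t) * t) • v = 0 := by
        have h3 := congrArg (fun w => (starRingEnd ℂ s) • w) hst
        have h4 := congrArg (fun w => t • w) h2
        simp only [smul_zero] at h3 h4
        have h6 := congrArg₂ (· - ·) h3 h4
        simp only [sub_zero] at h6
        rw [← h6]; module
      have h7 : (starRingEnd ℂ s) * s + (starRingEnd ℂ t) * t = 0 := by
        by_contra hne
        exact hv (by simpa [hne] using smul_eq_zero.mp h5)
      have hs' : Complex.normSq s + Complex.normSq t = 0 := by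
        rw [mul_comm ((starRingEnd ℂ) s) s, mul_comm ((starRingEnd ℂ) t) t,
          Complex.mul_conj, Complex.mul_conj] at h7
        have := congrArg Complex.re h7
        simpa using this
      constructor
      · exact Complex.normSq_eq_zero.mp (by nlinarith [Complex.normSq_nonneg s, Complex.normSq_nonneg t])
      · exact Complex.normSq_eq_zero.mp (by nlinarith [Complex.normSq_nonneg s, Complex.normSq_nonneg t])
    set U : Submodule ℂ V := Submodule.span ℂ {v, J v} with hU
    have hUrank : finrank ℂ U = 2 := by
      have h := finrank_span_eq_card hli
      have hr : Set.range ![v, J v] = {v, J v} := by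
        ext x; simp [Matrix.range_cons, Matrix.range_empty]; tauto
      rw [hr] at h
      simpa using h
    have hJU : ∀ u ∈ U, J u ∈ U := by
      intro u hu
      rw [hU, Submodule.mem_span_pair] at hu ⊢
      obtain ⟨a, b, rfl⟩ := hu
      refine ⟨-(starRingEnd ℂ b), starRingEnd ℂ a, ?_⟩
      rw [hadd, hsmul, hsmul, hsq]
      module
    have hrankQ : finrank ℂ (V ⧸ U) + 2 = k := by
      have := Submodule.finrank_quotient_add_finrank U
      omega
    set J' : V ⧸ U → V ⧸ U := fun q => Submodule.Quotient.mk (J q.out) with hJ'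
    have hmk : ∀ x : V, J' (Submodule.Quotient.mk x) = Submodule.Quotient.mk (J x) := by
      intro x
      rw [hJ']
      rw [Submodule.Quotient.eq]
      rw [← hJsub]
      apply hJU
      rw [← Submodule.Quotient.eq]
      exact Quotient.out_eq' _
    have hsurj := Submodule.Quotient.mk_surjective U
    have hEven2 : Even (finrank ℂ (V ⧸ U)) := by
      apply IH (finrank ℂ (V ⧸ U)) (by omega) (V ⧸ U) J'
      · intro x y
        obtain ⟨a, rfl⟩ := hsurj x
        obtain ⟨b, rfl⟩ := hsurj y
        calc J' (Submodule.Quotient.mk a + Submodule.Quotient.mk b)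
            = J' (Submodule.Quotient.mk (a + b)) := by rw [Submodule.Quotient.mk_add]
          _ = Submodule.Quotient.mk (J (a + b)) := hmk _
          _ = J' (Submodule.Quotient.mk a) + J' (Submodule.Quotient.mk b) := by
              rw [hadd, Submodule.Quotient.mk_add, hmk, hmk]
      · intro c x
        obtain ⟨a, rfl⟩ := hsurj x
        calc J' (c • Submodule.Quotient.mk a)
            = J' (Submodule.Quotient.mk (c • a)) := by rw [Submodule.Quotient.mk_smul]
          _ = Submodule.Quotient.mk (J (c • a)) := hmk _
          _ = (starRingEnd ℂ c) • J' (Submodule.Quotient.mk a) := by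
              rw [hsmul, Submodule.Quotient.mk_smul, hmk]
      · intro x
        obtain ⟨a, rfl⟩ := hsurj x
        calc J' (J' (Submodule.Quotient.mk a))
            = J' (Submodule.Quotient.mk (J a)) := congrArg J' (hmk a)
          _ = Submodule.Quotient.mk (J (J a)) := hmk _
          _ = -Submodule.Quotient.mk a := by rw [hsq, Submodule.Quotient.mk_neg]
      · rfl
    obtain ⟨m, hm⟩ := hEven2
    exact ⟨m + 1, by omega⟩
open Module

lemma finrankAux {n : ℕ} (p q : Submodule ℂ (EuclideanSpace ℂ (Fin n)))
    (J : EuclideanSpace ℂ (Fin n) → EuclideanSpace ℂ (Fin n))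
    (hadd : ∀ x y, J (x + y) = J x + J y)
    (hsmul : ∀ (c : ℂ) x, J (c • x) = (starRingEnd ℂ c) • J x)
    (hinj : Function.Injective J)
    (hpq : ∀ x ∈ p, J x ∈ q) (hqp : ∀ x ∈ q, J x ∈ p) :
    finrank ℂ p = finrank ℂ q := by
  have mkmap : ∀ (p q : Submodule ℂ (EuclideanSpace ℂ (Fin n))),
      (∀ x ∈ p, J x ∈ q) → finrank ℝ p ≤ finrank ℝ q := by
    intro p q hpq
    let f : p →ₗ[ℝ] q :=
      { toFun := fun x => ⟨J x, hpq x x.2⟩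
        map_add' := by intro x y; ext; simp [hadd]
        map_smul' := by
          intro r x
          apply Subtype.ext
          show J (((r • x : p) : EuclideanSpace ℂ (Fin n))) = r • (J (x : EuclideanSpace ℂ (Fin n)))
          rw [Submodule.coe_smul_of_tower]
          rw [show r • (x : EuclideanSpace ℂ (Fin n)) = ((r : ℂ)) • (x : EuclideanSpace ℂ (Fin n))
            from (algebraMap_smul ℂ r _).symm]
          rw [hsmul]
          rw [show (starRingEnd ℂ) ((r : ℂ)) = ((r : ℂ)) from Complex.conj_ofReal r]
          exact algebraMap_smul ℂ r _ }
    have hfinj : Function.Injective f := by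
      intro x y hxy
      apply Subtype.ext
      apply hinj
      exact congrArg Subtype.val hxy
    exact LinearMap.finrank_le_finrank_of_injective hfinj
  have h1 : finrank ℝ p = finrank ℝ q := le_antisymm (mkmap p q hpq) (mkmap q p hqp)
  have h2 : finrank ℝ ℂ * finrank ℂ p = finrank ℝ p := finrank_mul_finrank ℝ ℂ p
  have h3 : finrank ℝ ℂ * finrank ℂ q = finrank ℝ q := finrank_mul_finrank ℝ ℂ q
  rw [Complex.finrank_real_complex] at h2 h3
  omega
open Module Polynomial Matrix

variable {n : ℕ}

lemma bridge (M : Matrix (Fin n) (Fin n) ℂ) :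
    LinearMap.charpoly (Matrix.toEuclideanLin M : Module.End ℂ (EuclideanSpace ℂ (Fin n)))
      = M.charpoly := by
  rw [← LinearMap.charpoly_toMatrix (Matrix.toEuclideanLin M) ((EuclideanSpace.basisFun (Fin n) ℂ).toBasis)]
  congr 1
  ext i j
  simp [LinearMap.toMatrix_apply, Matrix.toEuclideanLin_apply, EuclideanSpace.basisFun_apply,
    Matrix.mulVec, dotProduct, EuclideanSpace.single_apply]

lemma shiftCharpoly (M : Matrix (Fin n) (Fin n) ℂ) (μ : ℂ) :
    (M - μ • 1).charpoly = (M.charpoly).comp (X + C μ) := by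
  have hφ : ∀ p : ℂ[X], p.comp (X + C μ) = (aeval (X + C μ) : ℂ[X] →ₐ[ℂ] ℂ[X]) p := by
    intro p; rw [Polynomial.comp, aeval_def, Polynomial.algebraMap_eq]
  rw [hφ]
  rw [Matrix.charpoly, Matrix.charpoly]
  rw [← AlgHom.coe_toRingHom, RingHom.map_det]
  congr 1
  rw [show ((aeval (X + C μ) : ℂ[X] →ₐ[ℂ] ℂ[X]) : ℂ[X] →+* ℂ[X]).mapMatrix M.charmatrix
    = M.charmatrix.map ((aeval (X + C μ) : ℂ[X] →ₐ[ℂ] ℂ[X]) : ℂ[X] →+* ℂ[X])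
    from rfl]
  apply Matrix.ext
  intro i j
  rw [Matrix.map_apply]
  by_cases h : i = j
  · subst h
    rw [charmatrix_apply_eq, charmatrix_apply_eq]
    simp [Matrix.sub_apply, Matrix.smul_apply, Matrix.one_apply_eq]
    ring
  · rw [charmatrix_apply_ne _ _ _ h, charmatrix_apply_ne _ _ _ h]
    simp [Matrix.sub_apply, Matrix.smul_apply, Matrix.one_apply_ne h]

lemma multAux (M : Matrix (Fin n) (Fin n) ℂ) (μ : ℂ) :
    Polynomial.rootMultiplicity μ M.charpoly
      = finrank ℂ (Module.End.maxGenEigenspace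
          (Matrix.toEuclideanLin M : Module.End ℂ (EuclideanSpace ℂ (Fin n))) μ) := by
  set f : Module.End ℂ (EuclideanSpace ℂ (Fin n)) := Matrix.toEuclideanLin M with hf
  have hg : Matrix.toEuclideanLin (M - μ • 1)
      = f - μ • (1 : Module.End ℂ (EuclideanSpace ℂ (Fin n))) := by
    apply LinearMap.ext
    intro x
    simp [hf, Matrix.toEuclideanLin_apply, Matrix.sub_mulVec, Matrix.smul_mulVec]
  have hmax : Module.End.maxGenEigenspace
        (f - μ • (1 : Module.End ℂ (EuclideanSpace ℂ (Fin n)))) 0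
      = Module.End.maxGenEigenspace f μ := by
    ext x
    simp only [Module.End.mem_maxGenEigenspace, zero_smul, sub_zero]
  have h1 := LinearMap.finrank_maxGenEigenspace_zero_eq
    (f - μ • (1 : Module.End ℂ (EuclideanSpace ℂ (Fin n))))
  rw [hmax] at h1
  rw [h1, ← hg, bridge, shiftCharpoly, ← Polynomial.rootMultiplicity_eq_natTrailingDegree]

open scoped InnerProductSpace Matrix

section D
variable {n : ℕ}
open Module Polynomial Matrix

lemma charpolyReal (B : Matrix (Fin n) (Fin n) ℂ)
    (η' : EuclideanSpace ℂ (Fin n) → EuclideanSpace ℂ (Fin n))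
    (hadd : ∀ x y, η' (x + y) = η' x + η' y)
    (hsmul : ∀ (c : ℂ) (x : EuclideanSpace ℂ (Fin n)), η' (c • x) = (starRingEnd ℂ c) • η' x)
    (hsq : ∀ x, η' (η' x) = -x)
    (hcomm : ∀ v, Matrix.toEuclideanLin B (η' v) = η' (Matrix.toEuclideanLin B v)) :
    B.charpoly.map (starRingEnd ℂ) = B.charpoly := by
  classical
  have hneg : ∀ x, η' (-x) = -η' x := by
    intro x; have := hsmul (-1) x; simpa using this
  set cj : EuclideanSpace ℂ (Fin n) → EuclideanSpace ℂ (Fin n) :=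
    fun x => WithLp.toLp 2 (fun i => starRingEnd ℂ (x i)) with hcj
  have hcjcj : ∀ x, cj (cj x) = x := by
    intro x; ext i; simp [hcj]
  have hcjadd : ∀ x y, cj (x + y) = cj x + cj y := by
    intro x y; ext i; simp [hcj]
  have hcjneg : ∀ x, cj (-x) = -(cj x) := by
    intro x; ext i; simp [hcj]
  have hcjsmul : ∀ (c : ℂ) x, cj (c • x) = (starRingEnd ℂ c) • cj x := by
    intro c x; ext i; simp [hcj]
  set e : EuclideanSpace ℂ (Fin n) ≃ₗ[ℂ] EuclideanSpace ℂ (Fin n) :=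
    { toFun := fun x => η' (cj x)
      invFun := fun x => cj (-(η' x))
      map_add' := by
        intro x y
        show η' (cj (x + y)) = η' (cj x) + η' (cj y)
        rw [hcjadd, hadd]
      map_smul' := by
        intro c x
        show η' (cj (c • x)) = (RingHom.id ℂ) c • η' (cj x)
        rw [hcjsmul, hsmul]
        simp
      left_inv := by
        intro x
        show cj (-(η' (η' (cj x)))) = x
        rw [hsq, neg_neg, hcjcj]
      right_inv := by
        intro x
        show η' (cj (cj (-(η' x)))) = x
        rw [hcjcj, hneg, hsq, neg_neg] } with he
  have hint : ∀ x, Matrix.toEuclideanLin B (e x)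
      = e (Matrix.toEuclideanLin (B.map (starRingEnd ℂ)) x) := by
    intro x
    have h1 : cj (Matrix.toEuclideanLin (B.map (starRingEnd ℂ)) x)
        = Matrix.toEuclideanLin B (cj x) := by
      ext i
      simp [hcj, Matrix.toEuclideanLin_apply, Matrix.mulVec, dotProduct, map_sum]
    show Matrix.toEuclideanLin B (η' (cj x)) = η' (cj (Matrix.toEuclideanLin (B.map (starRingEnd ℂ)) x))
    rw [h1, hcomm]
  have hconj : e.conj (Matrix.toEuclideanLin (B.map (starRingEnd ℂ)))
      = (Matrix.toEuclideanLin B : Module.End ℂ (EuclideanSpace ℂ (Fin n))) := by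
    apply LinearMap.ext
    intro x
    rw [LinearEquiv.conj_apply]
    show e ((Matrix.toEuclideanLin (B.map (starRingEnd ℂ))) (e.symm x)) = _
    rw [← hint, e.apply_symm_apply]
  have := LinearEquiv.charpoly_conj e (Matrix.toEuclideanLin (B.map (starRingEnd ℂ)))
  rw [hconj, bridge, bridge, Matrix.charpoly_map] at this
  exact this.symm
end D

section E
variable {n : ℕ}
open Module Polynomial Matrix

lemma absRoot (B : Matrix (Fin n) (Fin n) ℂ) (hB1 : Bᴴ * B = 1)
    (μ : ℂ) (hroot : μ ∈ B.charpoly.roots) : ‖μ‖ = 1 := by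
  classical
  set f : Module.End ℂ (EuclideanSpace ℂ (Fin n)) := Matrix.toEuclideanLin B with hf
  have hnorm : ∀ x : EuclideanSpace ℂ (Fin n), ⟪f x, f x⟫_ℂ = ⟪x, x⟫_ℂ := by
    intro x
    have hadj := Matrix.toEuclideanLin_conjTranspose_eq_adjoint B
    have h1 : ⟪x, (LinearMap.adjoint f) (f x)⟫_ℂ = ⟪f x, f x⟫_ℂ :=
      LinearMap.adjoint_inner_right f x (f x)
    rw [← h1, ← hadj]
    congr 1
    show (Matrix.toEuclideanLin Bᴴ) ((Matrix.toEuclideanLin B) x) = x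
    apply_fun (WithLp.equiv 2 (Fin n → ℂ))
    simp [Matrix.toEuclideanLin_apply, Matrix.mulVec_mulVec, hB1, Matrix.one_mulVec]
  -- get an eigenvector
  have hp0 : B.charpoly ≠ 0 := (Matrix.charpoly_monic B).ne_zero
  have hmul : 0 < Polynomial.rootMultiplicity μ B.charpoly :=
    (Polynomial.rootMultiplicity_pos hp0).mpr (Polynomial.isRoot_of_mem_roots hroot)
  rw [multAux] at hmul
  have hne : Module.End.maxGenEigenspace f μ ≠ ⊥ := by
    intro h
    rw [← hf] at hmul
    rw [h] at hmul
    simp [finrank_bot] at hmul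
  obtain ⟨x, hx, hx0⟩ := Submodule.exists_mem_ne_zero_of_ne_bot hne
  rw [Module.End.mem_maxGenEigenspace] at hx
  set k₀ := Nat.find hx with hk₀
  have hk₀0 : k₀ ≠ 0 := by
    intro h
    have := Nat.find_spec hx
    rw [← hk₀, h] at this
    simp at this
    exact hx0 this
  set y := ((f - μ • 1) ^ (k₀ - 1)) x with hy
  have hy0 : y ≠ 0 := Nat.find_min hx (by omega)
  have hfy : f y = μ • y := by
    have h1 : ((f - μ • 1) ^ k₀) x = 0 := Nat.find_spec hx
    have h2 : (f - μ • 1) y = 0 := by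
      rw [hy, ← Module.End.mul_apply, ← pow_succ']
      rw [show k₀ - 1 + 1 = k₀ by omega]
      exact h1
    have := sub_eq_zero.mp (by simpa [LinearMap.sub_apply] using h2)
    simpa using this
  have h3 : ⟪y, y⟫_ℂ ≠ 0 := inner_self_ne_zero.mpr hy0
  have h4 := hnorm y
  rw [hfy, inner_smul_left, inner_smul_right] at h4
  have h5 : ((starRingEnd ℂ μ) * μ - 1) * ⟪y, y⟫_ℂ = 0 := by linear_combination h4
  have h6 : Complex.normSq μ = 1 := by
    rcases mul_eq_zero.mp h5 with h | h
    · have h7 : μ * (starRingEnd ℂ μ) = 1 := by linear_combination h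
      have h8 : ((Complex.normSq μ : ℂ)) = 1 := by rw [← Complex.mul_conj]; exact h7
      exact_mod_cast h8
    · exact absurd h h3
  rw [← Complex.sq_norm] at h6
  nlinarith [norm_nonneg μ]

lemma prodAux : ∀ (c : ℕ) (M : Multiset ℂ), M.card = c →
    (∀ μ ∈ M, ‖μ‖ = 1) → M.map (starRingEnd ℂ) = M →
    (∀ μ : ℂ, μ.im = 0 → Even (M.count μ)) → M.prod = 1 := by
  intro c
  induction c using Nat.strong_induction_on with
  | _ c IH =>
    intro M hcard habs hconj heven
    rcases Nat.eq_zero_or_pos c with h0 | hpos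
    · rw [h0, Multiset.card_eq_zero] at hcard
      simp [hcard]
    · have : M ≠ 0 := by
        intro h; rw [h] at hcard; simp at hcard; omega
      obtain ⟨μ, hμ⟩ := Multiset.exists_mem_of_ne_zero this
      by_cases hre : μ.im = 0
      · -- real eigenvalue, even multiplicity
        have hcnt : 2 ≤ M.count μ := by
          have h1 := heven μ hre
          have h2 : 0 < M.count μ := Multiset.count_pos.mpr hμ
          rcases h1 with ⟨m, hm⟩; omega
        have hle : (μ ::ₘ μ ::ₘ 0) ≤ M := by
          rw [Multiset.le_iff_count]
          intro a
          by_cases h : a = μ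
          · subst h; simpa using hcnt
          · simp [Multiset.count_cons, h]
        set M' := M - (μ ::ₘ μ ::ₘ 0) with hM'
        have hMeq : M = (μ ::ₘ μ ::ₘ 0) + M' := by
          rw [hM', add_comm, tsub_add_cancel_of_le hle]
        have hcard' : M'.card = c - 2 := by
          have := congrArg Multiset.card hMeq
          simp at this
          omega
        have hconj' : M'.map (starRingEnd ℂ) = M' := by
          have hμc : starRingEnd ℂ μ = μ := Complex.conj_eq_iff_im.mpr hre
          have := hconj
          rw [hMeq, Multiset.map_add] at this
          simp only [Multiset.map_cons, Multiset.map_zero, hμc] at this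
          exact add_left_cancel this
        have habs' : ∀ ν ∈ M', ‖ν‖ = 1 := fun ν hν =>
          habs ν (Multiset.mem_of_le (by rw [hMeq]; exact le_add_self) hν)
        have heven' : ∀ ν : ℂ, ν.im = 0 → Even (M'.count ν) := by
          intro ν hν
          have h1 := heven ν hν
          have h2 : M.count ν = (μ ::ₘ μ ::ₘ 0).count ν + M'.count ν := by
            rw [hMeq, Multiset.count_add]
          by_cases h : ν = μ
          · subst h
            simp [Multiset.count_cons] at h2
            rcases h1 with ⟨m, hm⟩
            exact ⟨m - 1, by omega⟩
          · simp [Multiset.count_cons, h] at h2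
            rw [← h2]; exact h1
        have hM'prod : M'.prod = 1 :=
          IH (c - 2) (by omega) M' hcard' habs' hconj' heven'
        have hμμ : μ * μ = 1 := by
          have h1 : ‖μ‖ = 1 := habs μ hμ
          have h2 : μ.re * μ.re + μ.im * μ.im = 1 := by
            have hn : Complex.normSq μ = 1 := by rw [← Complex.sq_norm, h1]; norm_num
            simpa [Complex.normSq_apply] using hn
          apply Complex.ext <;> simp [Complex.mul_re, Complex.mul_im, hre] <;> nlinarith
        rw [hMeq, Multiset.prod_add]
        simp [hμμ, hM'prod]
      · -- non-real eigenvalue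
        have hμc : starRingEnd ℂ μ ≠ μ := fun h => hre (Complex.conj_eq_iff_im.mp h)
        have hcnt : 0 < M.count (starRingEnd ℂ μ) := by
          rw [← hconj, Multiset.count_map_eq_count' _ _ (RingHom.injective _)]
          exact Multiset.count_pos.mpr hμ
        have hle : (μ ::ₘ (starRingEnd ℂ μ) ::ₘ 0) ≤ M := by
          rw [Multiset.le_iff_count]
          intro a
          by_cases h1 : a = μ
          · subst h1
            have := Multiset.count_pos.mpr hμ
            simp [Multiset.count_cons, Ne.symm hμc]
            omega
          · by_cases h2 : a = starRingEnd ℂ μ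
            · subst h2
              simp [Multiset.count_cons, hμc]
              omega
            · simp [Multiset.count_cons, h1, h2]
        set M' := M - (μ ::ₘ (starRingEnd ℂ μ) ::ₘ 0) with hM'
        have hMeq : M = (μ ::ₘ (starRingEnd ℂ μ) ::ₘ 0) + M' := by
          rw [hM', add_comm, tsub_add_cancel_of_le hle]
        have hcard' : M'.card = c - 2 := by
          have := congrArg Multiset.card hMeq
          simp at this
          omega
        have hconj' : M'.map (starRingEnd ℂ) = M' := by
          have h := hconj
          rw [hMeq, Multiset.map_add] at h
          simp only [Multiset.map_cons, Multiset.map_zero, Complex.conj_conj] at h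
          rw [show ((starRingEnd ℂ μ) ::ₘ μ ::ₘ (0 : Multiset ℂ))
            = μ ::ₘ (starRingEnd ℂ μ) ::ₘ 0 from Multiset.cons_swap _ _ _] at h
          exact add_left_cancel h
        have habs' : ∀ ν ∈ M', ‖ν‖ = 1 := fun ν hν =>
          habs ν (Multiset.mem_of_le (by rw [hMeq]; exact le_add_self) hν)
        have heven' : ∀ ν : ℂ, ν.im = 0 → Even (M'.count ν) := by
          intro ν hν
          have h1 := heven ν hν
          have h2 : M.count ν = (μ ::ₘ (starRingEnd ℂ μ) ::ₘ 0).count ν + M'.count ν := by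
            rw [hMeq, Multiset.count_add]
          have hν1 : ν ≠ μ := fun h => hre (h ▸ hν)
          have hν2 : ν ≠ starRingEnd ℂ μ := by
            intro h
            apply hre
            have : (starRingEnd ℂ μ).im = 0 := h ▸ hν
            simpa using this
          simp [Multiset.count_cons, hν1, hν2] at h2
          rw [← h2]; exact h1
        have hM'prod : M'.prod = 1 :=
          IH (c - 2) (by omega) M' hcard' habs' hconj' heven'
        have hμμ : μ * (starRingEnd ℂ μ) = 1 := by
          rw [Complex.mul_conj]
          have h1 : ‖μ‖ = 1 := habs μ hμ
          rw [← Complex.sq_norm, h1]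
          simp
        rw [hMeq, Multiset.prod_add]
        simp [hμμ, hM'prod]
end E

open scoped InnerProductSpace Matrix

/-- A finite-dimensional unitary matrix `B` commuting with an antiunitary
`η'` with `η'² = -1` has `det B = 1`; the eigenspaces of `λ` and `λ̄` have the same
dimension, and every real eigenvalue has even multiplicity (Kramers degeneracy). -/
theorem unitary_commuting_with_quaternionic_structure
    (n : ℕ) (B : Matrix (Fin n) (Fin n) ℂ)
    (hB : Bᴴ * B = 1 ∧ B * Bᴴ = 1)
    (η' : EuclideanSpace ℂ (Fin n) → EuclideanSpace ℂ (Fin n))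
    (hadd : ∀ x y, η' (x + y) = η' x + η' y)
    (hsmul : ∀ (c : ℂ) (x : EuclideanSpace ℂ (Fin n)), η' (c • x) = (starRingEnd ℂ c) • η' x)
    (hinner : ∀ x y, ⟪η' x, η' y⟫_ℂ = ⟪y, x⟫_ℂ)
    (hsq : ∀ x, η' (η' x) = -x)
    (hcomm : ∀ v, Matrix.toEuclideanLin B (η' v) = η' (Matrix.toEuclideanLin B v)) :
    B.det = 1 ∧
    (∀ μ : ℂ, Module.finrank ℂ (Module.End.eigenspace (Matrix.toEuclideanLin B) μ)
        = Module.finrank ℂ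
            (Module.End.eigenspace (Matrix.toEuclideanLin B) (starRingEnd ℂ μ))) ∧
    (∀ μ : ℝ, Even (Module.finrank ℂ
        (Module.End.eigenspace (Matrix.toEuclideanLin B) (μ : ℂ)))) := by
  classical
  set f : Module.End ℂ (EuclideanSpace ℂ (Fin n)) := Matrix.toEuclideanLin B with hf
  have hinj : Function.Injective η' := by
    intro x y hxy
    have := congrArg η' hxy
    rw [hsq, hsq] at this
    exact neg_injective this
  have hneg : ∀ x, η' (-x) = -η' x := by
    intro x; have := hsmul (-1) x; simpa using this
  have hzero : η' 0 = 0 := by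
    have := hadd 0 0; simpa using this
  have hsub : ∀ x y, η' (x - y) = η' x - η' y := by
    intro x y
    rw [sub_eq_add_neg, hadd, hneg, sub_eq_add_neg]
  -- generic evenness for η'-invariant subspaces
  have evenSub : ∀ (p : Submodule ℂ (EuclideanSpace ℂ (Fin n))), (∀ x ∈ p, η' x ∈ p) →
      Even (Module.finrank ℂ p) := by
    intro p hp
    refine evenAux (Module.finrank ℂ p) p (fun x => ⟨η' x, hp x x.2⟩) ?_ ?_ ?_ rfl
    · intro x y
      apply Subtype.ext
      show η' ((x : EuclideanSpace ℂ (Fin n)) + y) = η' x + η' y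
      exact hadd _ _
    · intro c x
      apply Subtype.ext
      show η' (c • (x : EuclideanSpace ℂ (Fin n))) = (starRingEnd ℂ c) • η' x
      exact hsmul _ _
    · intro x
      apply Subtype.ext
      show η' (η' (x : EuclideanSpace ℂ (Fin n))) = -(x : EuclideanSpace ℂ (Fin n))
      exact hsq _
  -- η' maps eigenspace μ into eigenspace (conj μ)
  have hmap : ∀ (μ : ℂ) (x : EuclideanSpace ℂ (Fin n)),
      x ∈ Module.End.eigenspace f μ → η' x ∈ Module.End.eigenspace f (starRingEnd ℂ μ) := by
    intro μ x hx
    rw [Module.End.mem_eigenspace_iff] at hx ⊢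
    rw [hf] at hx ⊢
    rw [hcomm, hx, hsmul]
  -- part 2
  have part2 : ∀ μ : ℂ, Module.finrank ℂ (Module.End.eigenspace f μ)
      = Module.finrank ℂ (Module.End.eigenspace f (starRingEnd ℂ μ)) := by
    intro μ
    apply finrankAux _ _ η' hadd hsmul hinj (hmap μ)
    intro x hx
    have := hmap (starRingEnd ℂ μ) x hx
    rwa [Complex.conj_conj] at this
  -- part 3
  have part3 : ∀ μ : ℝ, Even (Module.finrank ℂ
      (Module.End.eigenspace f ((μ : ℝ) : ℂ))) := by
    intro μ
    apply evenSub
    intro x hx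
    have h := hmap ((μ : ℝ) : ℂ) x hx
    rwa [Complex.conj_ofReal] at h
  -- part 1: determinant
  -- commutation of η' with powers of (f - μ•1) for real μ
  have hpowcomm : ∀ (μ : ℂ), starRingEnd ℂ μ = μ → ∀ (k : ℕ) (x : EuclideanSpace ℂ (Fin n)),
      (((f - μ • 1) ^ k)) (η' x) = η' ((((f - μ • 1) ^ k)) x) := by
    intro μ hμ k
    induction k with
    | zero => intro x; simp
    | succ k ih =>
      intro x
      rw [pow_succ', Module.End.mul_apply, Module.End.mul_apply, ih]
      set z := ((f - μ • 1) ^ k) x with hz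
      show (f - μ • 1) (η' z) = η' ((f - μ • 1) z)
      rw [LinearMap.sub_apply, LinearMap.sub_apply]
      rw [LinearMap.smul_apply, LinearMap.smul_apply, Module.End.one_apply, Module.End.one_apply]
      rw [hsub, hf, hcomm, hsmul, hμ]
  have hmaxinv : ∀ (μ : ℂ), starRingEnd ℂ μ = μ →
      ∀ x ∈ Module.End.maxGenEigenspace f μ, η' x ∈ Module.End.maxGenEigenspace f μ := by
    intro μ hμ x hx
    rw [Module.End.mem_maxGenEigenspace] at hx ⊢
    obtain ⟨k, hk⟩ := hx
    exact ⟨k, by rw [hpowcomm μ hμ k, hk, hzero]⟩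
  have hdet : B.det = 1 := by
    rw [Matrix.det_eq_prod_roots_charpoly]
    apply prodAux (Multiset.card B.charpoly.roots) _ rfl
    · intro μ hμ
      exact absRoot B hB.1 μ hμ
    · have hreal := charpolyReal B η' hadd hsmul hsq hcomm
      have hsplit : B.charpoly.Splits := IsAlgClosed.splits _
      have := Polynomial.Splits.roots_map hsplit (starRingEnd ℂ)
      rw [hreal] at this
      exact this.symm
    · intro μ hμ
      have hconjμ : starRingEnd ℂ μ = μ := Complex.conj_eq_iff_im.mpr hμ
      rw [Polynomial.count_roots, multAux]
      exact evenSub _ (hmaxinv μ hconjμ)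
  exact ⟨hdet, part2, part3⟩
end

section
/- Let k ↦ A(k) be a continuous closed loop in the set of invertible antisymmetric complex 2n×2n matrices (A(k)^T = -A(k), det A(k) ≠ 0). Then the winding number of k ↦ det A(k) around the origin is even. -/
open Matrix
open scoped Matrix Real

set_option maxHeartbeats 1000000
set_option synthInstance.maxHeartbeats 1000000

theorem skew_det_sq : ∀ (n : ℕ) (K : Type) (_ : Field K) (_ : CharZero K)
    (A : Matrix (Fin (2 * n)) (Fin (2 * n)) K), Aᵀ = -A → ∃ c : K, A.det = c * c := by
  intro n
  induction n with
  | zero =>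
    intro K _ _ A _
    exact ⟨1, by simp [Matrix.det_isEmpty]⟩
  | succ n ih =>
    intro K _ _ A hA
    by_cases hd : A.det = 0
    · exact ⟨0, by simp [hd]⟩
    -- A ≠ 0, find a nonzero entry
    have hA0 : A ≠ 0 := by
      rintro rfl; simp at hd
    obtain ⟨i, j, hij⟩ : ∃ i j, A i j ≠ 0 := by
      by_contra h
      push_neg at h
      exact hA0 (by ext i j; simp [h])
    have hdiag : ∀ i, A i i = 0 := by
      intro i
      have := congrFun (congrFun hA i) i
      simp only [Matrix.transpose_apply, Matrix.neg_apply] at this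
      have h2 : (2 : K) * A i i = 0 := by ring_nf; linear_combination this
      simpa using h2
    have hne : i ≠ j := by rintro rfl; exact hij (hdiag i)
    set e0 : Fin (2*(n+1)) := ⟨0, by omega⟩ with he0
    set e1 : Fin (2*(n+1)) := ⟨1, by omega⟩ with he1
    have h01 : e0 ≠ e1 := by simp [he0, he1, Fin.ext_iff]
    set σ₁ := Equiv.swap e0 i with hσ₁
    have hai : σ₁ e1 ≠ i := by
      intro h
      apply h01
      have hsi : σ₁.symm i = e0 := by rw [hσ₁]; simp
      have : e1 = e0 := by
        calc e1 = σ₁.symm (σ₁ e1) := (σ₁.symm_apply_apply e1).symm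
          _ = σ₁.symm i := by rw [h]
          _ = e0 := hsi
      exact this.symm
    set σ := σ₁.trans (Equiv.swap (σ₁ e1) j) with hσ
    have hσ0 : σ e0 = i := by
      rw [hσ, Equiv.trans_apply, hσ₁, Equiv.swap_apply_left,
        Equiv.swap_apply_of_ne_of_ne (Ne.symm hai) hne]
    have hσ1 : σ e1 = j := by
      rw [hσ, Equiv.trans_apply, Equiv.swap_apply_left]
    -- conjugated matrix
    set M := A.submatrix σ σ with hM
    have hMdet : M.det = A.det := Matrix.det_submatrix_equiv_self σ A
    have hMskew : Mᵀ = -M := by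
      rw [hM, Matrix.transpose_submatrix, hA]
      rfl
    have hM01 : M e0 e1 = A i j := by rw [hM]; simp [Matrix.submatrix_apply, hσ0, hσ1]
    set e : Fin 2 ⊕ Fin (2*n) ≃ Fin (2*(n+1)) := finSumFinEquiv.trans (finCongr (by omega)) with he
    set N := M.submatrix e e with hN
    have hNdet : N.det = M.det := Matrix.det_submatrix_equiv_self e M
    have hNskew : Nᵀ = -N := by
      rw [hN, Matrix.transpose_submatrix, hMskew]; rfl
    have he0' : e (Sum.inl 0) = e0 := by
      rw [he]; apply Fin.ext; simp [finSumFinEquiv, Fin.ext_iff, he0]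
    have he1' : e (Sum.inl 1) = e1 := by
      rw [he]; apply Fin.ext; simp [finSumFinEquiv, Fin.ext_iff, he1, Nat.mod_eq_of_lt (show 1 < 2 * (n + 1) by omega)]
    have hN01 : N (Sum.inl 0) (Sum.inl 1) = A i j := by
      rw [hN, Matrix.submatrix_apply, he0', he1', hM01]
    set P := N.toBlocks₁₁ with hP
    set B := N.toBlocks₁₂ with hB
    set C := N.toBlocks₂₁ with hC
    set D := N.toBlocks₂₂ with hD
    have hblocks : N = Matrix.fromBlocks P B C D := (Matrix.fromBlocks_toBlocks N).symm
    have hPskew : Pᵀ = -P := by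
      ext a b
      have := congrFun (congrFun hNskew (Sum.inl a)) (Sum.inl b)
      simpa [hP, Matrix.toBlocks₁₁] using this
    have hCB : Cᵀ = -B := by
      ext a b
      have := congrFun (congrFun hNskew (Sum.inl a)) (Sum.inr b)
      simpa [hB, hC, Matrix.toBlocks₁₂, Matrix.toBlocks₂₁] using this
    have hDskew : Dᵀ = -D := by
      ext a b
      have := congrFun (congrFun hNskew (Sum.inr a)) (Sum.inr b)
      simpa [hD, Matrix.toBlocks₂₂] using this
    have hP01 : P 0 1 = A i j := hN01
    have hP10 : P 1 0 = - A i j := by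
      have := congrFun (congrFun hPskew 0) 1
      simp only [Matrix.transpose_apply, Matrix.neg_apply] at this
      rw [this, hP01]
    have hP00 : P 0 0 = 0 := by
      have := congrFun (congrFun hPskew 0) 0
      simp only [Matrix.transpose_apply, Matrix.neg_apply] at this
      have h2 : (2:K) * P 0 0 = 0 := by linear_combination this
      simpa using h2
    have hP11 : P 1 1 = 0 := by
      have := congrFun (congrFun hPskew 1) 1
      simp only [Matrix.transpose_apply, Matrix.neg_apply] at this
      have h2 : (2:K) * P 1 1 = 0 := by linear_combination this
      simpa using h2
    have hPdet : P.det = A i j * A i j := by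
      rw [Matrix.det_fin_two, hP00, hP11, hP01, hP10]; ring
    haveI : Invertible P := P.invertibleOfIsUnitDet (by
      rw [hPdet]; exact (mul_ne_zero hij hij).isUnit)
    have hSchur : N.det = P.det * (D - C * ⅟P * B).det := by
      rw [hblocks, Matrix.det_fromBlocks₁₁]
    set S := D - C * ⅟P * B with hS
    have hBC : Bᵀ = -C := by
      have h := congrArg Matrix.transpose hCB
      rw [Matrix.transpose_transpose, Matrix.transpose_neg] at h
      rw [h, neg_neg]
    have hinvP : (⅟P)ᵀ = -⅟P := by
      have h1 : (⅟P)ᵀ * Pᵀ = 1 := by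
        rw [← Matrix.transpose_mul, mul_invOf_self, Matrix.transpose_one]
      rw [hPskew, Matrix.mul_neg] at h1
      have h2 : -(⅟P)ᵀ * P = 1 := by rw [Matrix.neg_mul]; exact h1
      have h3 := invOf_eq_left_inv h2
      simpa using (congrArg Neg.neg h3).symm
    have hSskew : Sᵀ = -S := by
      rw [hS]
      rw [Matrix.transpose_sub, Matrix.transpose_mul, Matrix.transpose_mul, hDskew, hinvP]
      rw [hBC, hCB]
      simp only [Matrix.neg_mul, Matrix.mul_neg, neg_neg, Matrix.mul_assoc]
      abel
    obtain ⟨c, hc⟩ := ih K ‹_› ‹_› S hSskew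
    refine ⟨A i j * c, ?_⟩
    calc A.det = N.det := by rw [hNdet, hMdet]
      _ = P.det * S.det := hSchur
      _ = (A i j * c) * (A i j * c) := by rw [hPdet, hc]; ring

noncomputable def genSkew (n : ℕ) :
    Matrix (Fin (2*n)) (Fin (2*n)) (MvPolynomial (Fin (2*n) × Fin (2*n)) ℂ) :=
  Matrix.of fun i j =>
    if i < j then MvPolynomial.X (i,j)
    else if j < i then - MvPolynomial.X (j,i) else 0

theorem genSkew_skew (n : ℕ) : (genSkew n)ᵀ = -(genSkew n) := by
  apply Matrix.ext; intro i j
  simp only [genSkew, Matrix.transpose_apply, Matrix.neg_apply, Matrix.of_apply]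
  rcases lt_trichotomy i j with h | h | h
  · simp [h, lt_asymm h]
  · subst h; simp
  · simp [h, lt_asymm h]

theorem exists_pf (n : ℕ) :
    ∃ P : MvPolynomial (Fin (2*n) × Fin (2*n)) ℂ,
      (genSkew n).det = P * P := by
  set R := MvPolynomial (Fin (2*n) × Fin (2*n)) ℂ
  let K := FractionRing R
  have hfin : Function.Injective (algebraMap R K) := IsFractionRing.injective R K
  have hXK : ((genSkew n).map (algebraMap R K))ᵀ = -((genSkew n).map (algebraMap R K)) := by
    rw [← Matrix.transpose_map, genSkew_skew]
    ext i j
    simp [Matrix.map_apply]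
  obtain ⟨c, hc⟩ := skew_det_sq n K inferInstance inferInstance ((genSkew n).map (algebraMap R K)) hXK
  have hdetmap : algebraMap R K (genSkew n).det = ((genSkew n).map (algebraMap R K)).det := RingHom.map_det (algebraMap R K) (genSkew n)
  have hint : IsIntegral R c := by
    refine ⟨Polynomial.X^2 - Polynomial.C (genSkew n).det,
      Polynomial.monic_X_pow_sub_C _ two_ne_zero, ?_⟩
    simp only [Polynomial.eval₂_sub, Polynomial.eval₂_pow, Polynomial.eval₂_X,
      Polynomial.eval₂_C]
    rw [hdetmap, hc]
    ring
  obtain ⟨P, hP⟩ := IsIntegrallyClosed.isIntegral_iff.mp hint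
  refine ⟨P, hfin ?_⟩
  rw [_root_.map_mul, hP, ← hc, hdetmap]

theorem det_eq_pf_sq (n : ℕ) (P : MvPolynomial (Fin (2*n) × Fin (2*n)) ℂ)
    (hP : (genSkew n).det = P * P)
    (A : Matrix (Fin (2*n)) (Fin (2*n)) ℂ) (hA : Aᵀ = -A) :
    A.det = (MvPolynomial.eval (fun q : Fin (2*n) × Fin (2*n) => A q.1 q.2) P) *
      (MvPolynomial.eval (fun q : Fin (2*n) × Fin (2*n) => A q.1 q.2) P) := by
  set φ : MvPolynomial (Fin (2*n) × Fin (2*n)) ℂ →+* ℂ :=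
    MvPolynomial.eval (fun q : Fin (2*n) × Fin (2*n) => A q.1 q.2) with hφ
  have hanti : ∀ i j, A j i = -A i j := by
    intro i j
    have := congrFun (congrFun hA i) j
    simpa using this
  have hdiag : ∀ i, A i i = 0 := by
    intro i
    have := hanti i i
    have h2 : (2:ℂ) * A i i = 0 := by linear_combination this
    simpa using h2
  have hmap : (genSkew n).map φ = A := by
    apply Matrix.ext; intro i j
    simp only [genSkew, Matrix.map_apply, Matrix.of_apply]
    rcases lt_trichotomy i j with h | h | h
    · rw [if_pos h, hφ]
      simp
    · subst h
      simp [hdiag]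
    · rw [if_neg (lt_asymm h), if_pos h, hφ]
      simp [hanti i j]
  calc A.det = ((genSkew n).map φ).det := by rw [hmap]
    _ = φ (genSkew n).det := (RingHom.map_det φ _).symm
    _ = φ P * φ P := by rw [hP, _root_.map_mul]


/-- For a continuous closed loop `k ↦ A(k)` of invertible antisymmetric
complex `2n×2n` matrices, the winding number of `k ↦ det A(k)` around the origin is
even. (The winding number is encoded via any continuous logarithm `g` of `det ∘ A`:
`g(2π) - g(0) = 2πi · (winding)`.) -/
theorem antisymmetric_loop_even_winding
    (n : ℕ) (A : ℝ → Matrix (Fin (2 * n)) (Fin (2 * n)) ℂ)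
    (hcont : Continuous A)
    (hper : ∀ k, A (k + 2 * π) = A k)
    (hanti : ∀ k, (A k)ᵀ = -A k)
    (hinv : ∀ k, IsUnit (A k)) :
    ∀ g : ℝ → ℂ, Continuous g → (∀ k, Complex.exp (g k) = (A k).det) →
      ∃ m : ℤ, g (2 * π) - g 0 = (2 * (π : ℂ) * Complex.I) * (2 * (m : ℂ)) := by
  intro g hg hgexp
  obtain ⟨P, hP⟩ := exists_pf n
  set p : ℝ → ℂ :=
    fun k => MvPolynomial.eval (fun q : Fin (2*n) × Fin (2*n) => A k q.1 q.2) P with hp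
  have hpsq : ∀ k, (A k).det = p k * p k := fun k => det_eq_pf_sq n P hP (A k) (hanti k)
  have hdetne : ∀ k, (A k).det ≠ 0 := fun k =>
    ((Matrix.isUnit_iff_isUnit_det _).mp (hinv k)).ne_zero
  have hpne : ∀ k, p k ≠ 0 := by
    intro k h
    exact hdetne k (by rw [hpsq k, h, mul_zero])
  have hpcont : Continuous p := by
    exact (MvPolynomial.continuous_eval (p := P)).comp
      (continuous_pi fun q => ((continuous_apply q.2).comp
        ((continuous_apply q.1).comp hcont)))
  set q : ℝ → ℂ := fun k => Complex.exp (g k / 2) / p k with hq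
  have hqsq : ∀ k, q k * q k = 1 := by
    intro k
    rw [hq]; simp only
    rw [div_mul_div_comm, ← Complex.exp_add,
      show g k / 2 + g k / 2 = g k by ring, hgexp k, hpsq k]
    exact div_self (mul_ne_zero (hpne k) (hpne k))
  have hq1 : ∀ k, q k = 1 ∨ q k = -1 := fun k => mul_self_eq_one_iff.mp (hqsq k)
  have hqcont : Continuous q :=
    (Complex.continuous_exp.comp (hg.div_const 2)).div hpcont hpne
  have hA2π : A (2*π) = A 0 := by have := hper 0; rwa [zero_add] at this
  have hp2π : p (2*π) = p 0 := by rw [hp]; simp only [hA2π]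
  have hrecont : Continuous fun k => (q k).re := Complex.continuous_re.comp hqcont
  have hnozero : ∀ k : ℝ, (q k).re ≠ 0 := by
    intro k
    rcases hq1 k with h | h <;> rw [h] <;> norm_num
  have hqeq : q (2*π) = q 0 := by
    rcases hq1 0 with h0 | h0 <;> rcases hq1 (2*π) with h2 | h2
    · rw [h0, h2]
    · exfalso
      have hmem : (0:ℝ) ∈ Set.Icc ((fun k => (q k).re) (2*π)) ((fun k => (q k).re) 0) := by
        simp only [h0, h2]
        norm_num
      obtain ⟨k, hk⟩ := intermediate_value_univ (2*π) 0 hrecont hmem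
      exact hnozero k hk
    · exfalso
      have hmem : (0:ℝ) ∈ Set.Icc ((fun k => (q k).re) 0) ((fun k => (q k).re) (2*π)) := by
        simp only [h0, h2]
        norm_num
      obtain ⟨k, hk⟩ := intermediate_value_univ 0 (2*π) hrecont hmem
      exact hnozero k hk
    · rw [h0, h2]
  have hexp : Complex.exp (g (2*π) / 2) = Complex.exp (g 0 / 2) := by
    have h := hqeq
    rw [hq] at h; simp only at h
    rw [hp2π, div_eq_div_iff (hpne 0) (hpne 0)] at h
    exact mul_right_cancel₀ (hpne 0) h
  obtain ⟨m, hm⟩ := Complex.exp_eq_exp_iff_exists_int.mp hexp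
  exact ⟨m, by linear_combination (2:ℂ) * hm⟩
end
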